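/- arXiv:1407.7650 — 7 statements merged into one kernel-verified Lean document; each statement's English description precedes it below -/
import Mathlib

section
/- Every nondecreasing and convex function c : ℕ → ℕ is strongly semi-convex. -/
/-- A function `c : ℕ → ℕ` is convex if `c (x+1) - c x ≤ c (x+2) - c (x+1)` for all `x ∈ ℕ`
(stated in `ℤ` to avoid truncated subtraction). -/
def ConvexFn (c : ℕ → ℕ) : Prop :=
  ∀ x : ℕ, (c (x + 1) : ℤ) - (c x : ℤ) ≤ (c (x + 2) : ℤ) - (c (x + 1) : ℤ)

/-- A function `c : ℕ → ℕ` is strongly semi-convex if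
`c (a+x)·x − c (a+x−1)·(x−1) ≤ c (b+y)·y − c (b+y−1)·(y−1)` for all `x, y ∈ ℕ` with
`1 ≤ x ≤ y` and all `a, b ∈ ℕ` with `a ≤ b`. -/
def StronglySemiConvex (c : ℕ → ℕ) : Prop :=
  ∀ a b x y : ℕ, 1 ≤ x → x ≤ y → a ≤ b →
    (c (a + x) : ℤ) * (x : ℤ) - (c (a + x - 1) : ℤ) * ((x : ℤ) - 1) ≤
      (c (b + y) : ℤ) * (y : ℤ) - (c (b + y - 1) : ℤ) * ((y : ℤ) - 1)

private def gaux (c : ℕ → ℕ) (a t : ℕ) : ℤ :=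
  (c (a + t + 1) : ℤ) * ((t : ℤ) + 1) - (c (a + t) : ℤ) * (t : ℤ)

private lemma step_mono (c : ℕ → ℕ) (hconv : ConvexFn c) :
    ∀ m n : ℕ, m ≤ n → (c (m + 1) : ℤ) - c m ≤ (c (n + 1) : ℤ) - c n := by
  intro m n h
  induction n, h using Nat.le_induction with
  | base => exact le_refl _
  | succ n hn ih => exact ih.trans (hconv n)

private lemma gaux_mono_a (c : ℕ → ℕ) (hmono : Monotone c) (hconv : ConvexFn c)
    (t : ℕ) : ∀ a b : ℕ, a ≤ b → gaux c a t ≤ gaux c b t := by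
  intro a b h
  induction b, h using Nat.le_induction with
  | base => exact le_refl _
  | succ b hb ih =>
    refine ih.trans ?_
    have h1 := hconv (b + t)
    have h2 : (c (b + t) : ℤ) ≤ c (b + t + 1) := by exact_mod_cast hmono (Nat.le_succ _)
    have ht : (0 : ℤ) ≤ (t : ℤ) := Int.natCast_nonneg t
    simp only [gaux]
    have e1 : b + 1 + t + 1 = b + t + 2 := by ring
    have e2 : b + 1 + t = b + t + 1 := by ring
    rw [e1, e2]
    nlinarith [h1, h2, ht]

private lemma gaux_mono_t (c : ℕ → ℕ) (hmono : Monotone c) (hconv : ConvexFn c)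
    (a : ℕ) : ∀ t u : ℕ, t ≤ u → gaux c a t ≤ gaux c a u := by
  intro t u h
  induction u, h using Nat.le_induction with
  | base => exact le_refl _
  | succ u hu ih =>
    refine ih.trans ?_
    have h1 := hconv (a + u)
    have h2 : (c (a + u) : ℤ) ≤ c (a + u + 2) := by
      exact_mod_cast hmono (by omega : a + u ≤ a + u + 2)
    have ht : (0 : ℤ) ≤ (u : ℤ) := Int.natCast_nonneg u
    simp only [gaux]
    have e1 : a + (u + 1) + 1 = a + u + 2 := by ring
    have e2 : a + (u + 1) = a + u + 1 := by ring
    rw [e1, e2]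
    push_cast
    nlinarith [h1, h2, ht]

/-- Every nondecreasing and convex function `c : ℕ → ℕ` is strongly semi-convex. -/
theorem stronglySemiConvex_of_monotone_convex (c : ℕ → ℕ)
    (hmono : Monotone c) (hconv : ConvexFn c) : StronglySemiConvex c := by
  intro a b x y hx hxy hab
  obtain ⟨t, rfl⟩ : ∃ t, x = t + 1 := ⟨x - 1, by omega⟩
  obtain ⟨u, rfl⟩ : ∃ u, y = u + 1 := ⟨y - 1, by omega⟩
  have key : gaux c a t ≤ gaux c b u :=
    (gaux_mono_a c hmono hconv t a b hab).trans
      (gaux_mono_t c hmono hconv b t u (by omega))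
  simp only [gaux] at key
  have e1 : a + (t + 1) - 1 = a + t := by omega
  have e2 : b + (u + 1) - 1 = b + u := by omega
  rw [e1, e2]
  have e3 : a + (t + 1) = a + t + 1 := by ring
  have e4 : b + (u + 1) = b + u + 1 := by ring
  rw [e3, e4]
  push_cast
  linarith [key]
end

section
/- The function c : ℕ → ℚ defined by c(x) = x for x ≤ 2 and c(x) = x − 1/4 for x ≥ 3 is nondecreasing and strongly semi-convex, but it is not convex. Consequently, not every strongly semi-convex nondecreasing function is convex. -/
/-- A function `c : ℕ → ℚ` is convex if `c (x+1) - c x ≤ c (x+2) - c (x+1)` for all `x ∈ ℕ`. -/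
def ConvexFnQ (c : ℕ → ℚ) : Prop :=
  ∀ x : ℕ, c (x + 1) - c x ≤ c (x + 2) - c (x + 1)

/-- A function `c : ℕ → ℚ` is strongly semi-convex if
`c (a+x)·x − c (a+x−1)·(x−1) ≤ c (b+y)·y − c (b+y−1)·(y−1)` for all `x, y ∈ ℕ` with
`1 ≤ x ≤ y` and all `a, b ∈ ℕ` with `a ≤ b`. -/
def StronglySemiConvexQ (c : ℕ → ℚ) : Prop :=
  ∀ a b x y : ℕ, 1 ≤ x → x ≤ y → a ≤ b →
    c (a + x) * (x : ℚ) - c (a + x - 1) * ((x : ℚ) - 1) ≤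
      c (b + y) * (y : ℚ) - c (b + y - 1) * ((y : ℚ) - 1)

/-- The function with `c x = x` for `x ≤ 2` and `c x = x - 1/4` for `x ≥ 3`. -/
def cEx : ℕ → ℚ := fun x => if x ≤ 2 then (x : ℚ) else (x : ℚ) - 1 / 4

lemma cEx_mono : Monotone cEx := by
  apply monotone_nat_of_le_succ
  intro n
  unfold cEx
  split_ifs with h1 h2 h2 <;> push_cast <;> linarith

lemma cEx_ssc : StronglySemiConvexQ cEx := by
  intro a b x y hx hxy hab
  obtain ⟨x', rfl⟩ : ∃ x', x = x' + 1 := ⟨x - 1, by omega⟩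
  obtain ⟨y', rfl⟩ : ∃ y', y = y' + 1 := ⟨y - 1, by omega⟩
  have e1 : a + (x' + 1) - 1 = a + x' := by omega
  have e2 : b + (y' + 1) - 1 = b + y' := by omega
  rw [e1, e2]
  have hab' : (a : ℚ) ≤ b := by exact_mod_cast hab
  have hxy' : (x' : ℚ) ≤ y' := by exact_mod_cast (show x' ≤ y' by omega)
  have ha0 : (0 : ℚ) ≤ a := by positivity
  have hb0 : (0 : ℚ) ≤ b := by positivity
  unfold cEx
  split_ifs with h1 h2 h3 h4 <;> push_cast <;> try (exfalso; omega)
  -- TTTT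
  · nlinarith [hab', hxy']
  -- TTFT : a+x'+1 ≤ 2, b+y' = 2
  · have c1 : (a : ℚ) + x' ≤ 1 := by exact_mod_cast (show a + x' ≤ 1 by omega)
    have c2 : (b : ℚ) + y' = 2 := by exact_mod_cast (show b + y' = 2 by omega)
    nlinarith [hxy', hb0, c1, c2]
  -- TTFF : a+x' ≤ 1, b+y' ≥ 3
  · have c1 : (a : ℚ) + x' ≤ 1 := by exact_mod_cast (show a + x' ≤ 1 by omega)
    have c2 : (3 : ℚ) ≤ b + y' := by exact_mod_cast (show 3 ≤ b + y' by omega)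
    nlinarith [hxy', c1, c2]
  -- FTFT : a+x' = 2, b+y' = 2
  · have c1 : (a : ℚ) + x' = 2 := by exact_mod_cast (show a + x' = 2 by omega)
    have c2 : (b : ℚ) + y' = 2 := by exact_mod_cast (show b + y' = 2 by omega)
    nlinarith [hxy', c1, c2]
  -- FTFF : a+x' = 2, b+y' ≥ 3
  · have c1 : (a : ℚ) + x' = 2 := by exact_mod_cast (show a + x' = 2 by omega)
    have c2 : (3 : ℚ) ≤ b + y' := by exact_mod_cast (show 3 ≤ b + y' by omega)
    nlinarith [hxy', ha0, c1, c2]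
  -- FFFF
  · nlinarith [hab', hxy']

/-- `cEx` is nondecreasing and strongly semi-convex but not convex; consequently, not every
strongly semi-convex nondecreasing function is convex. -/
theorem cEx_stronglySemiConvex_not_convex :
    (Monotone cEx ∧ StronglySemiConvexQ cEx ∧ ¬ ConvexFnQ cEx) ∧
      ¬ (∀ c : ℕ → ℚ, Monotone c → StronglySemiConvexQ c → ConvexFnQ c) := by
  have hnc : ¬ ConvexFnQ cEx := by
    intro h
    have := h 1
    norm_num [cEx] at this
  exact ⟨⟨cEx_mono, cEx_ssc, hnc⟩, fun h => hnc (h cEx cEx_mono cEx_ssc)⟩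
end

section
/- (Demand Increase) Let x ∈ B_f(d) minimize the cost C_a(x) = Σ_{r∈R} c_r(a_r + x_r)·x_r over B_f(d), and suppose d + 1 ≤ f(R). Then there exists y ∈ B_f(d+1) that minimizes C_a over B_f(d+1) and satisfies H(x, y) = Σ_{r∈R} |x_r − y_r| = 1; i.e., y is obtained from x by increasing the allocation on a single resource by one unit. -/
/-- `f : 2^R → ℕ` is submodular if `f (U ∪ V) + f (U ∩ V) ≤ f U + f V` for all `U, V ⊆ R`. -/
def Submodular {R : Type*} [DecidableEq R] (f : Finset R → ℕ) : Prop :=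
  ∀ U V : Finset R, f (U ∪ V) + f (U ∩ V) ≤ f U + f V

/-- An integral polymatroid rank function: submodular, monotone and normalized. -/
def IsPolymatroidRank {R : Type*} [DecidableEq R] (f : Finset R → ℕ) : Prop :=
  Submodular f ∧ (∀ U V : Finset R, U ⊆ V → f U ≤ f V) ∧ f ∅ = 0

/-- The integral polymatroid base polyhedron
`B_f(d) = { x ∈ ℕ^R : Σ_{r∈U} x_r ≤ f(U) ∀ U ⊆ R, Σ_{r∈R} x_r = d }`. -/
def basePolyhedron {R : Type*} [Fintype R] [DecidableEq R] (f : Finset R → ℕ) (d : ℕ) :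
    Set (R → ℕ) :=
  {x | (∀ U : Finset R, ∑ r ∈ U, x r ≤ f U) ∧ ∑ r, x r = d}

/-- `u`-truncated strong semi-convexity of `c : ℕ → ℕ`. -/
def TruncStronglySemiConvex (u : ℕ) (c : ℕ → ℕ) : Prop :=
  ∀ a b x y : ℕ, 1 ≤ x → x ≤ y → y ≤ u → a ≤ b →
    (c (a + x) : ℤ) * (x : ℤ) - (c (a + x - 1) : ℤ) * ((x : ℤ) - 1) ≤
      (c (b + y) : ℤ) * (y : ℤ) - (c (b + y - 1) : ℤ) * ((y : ℤ) - 1)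

/-- The Hamming distance `H(x, y) = Σ_{r∈R} |x_r − y_r|` of `x, y ∈ ℕ^R`. -/
def natHamming {R : Type*} [Fintype R] (x y : R → ℕ) : ℕ :=
  ∑ r, ((x r : ℤ) - (y r : ℤ)).natAbs

set_option linter.unusedSectionVars false

section Aux
variable {R : Type*} [Fintype R] [DecidableEq R]

/-- Feasibility in the polymatroid. -/
def Feas (f : Finset R → ℕ) (z : R → ℕ) : Prop := ∀ U : Finset R, ∑ r ∈ U, z r ≤ f U

/-- `z + e_p - e_q`. -/
def bump (z : R → ℕ) (p q : R) : R → ℕ :=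
  fun t => if t = p then z t + 1 else if t = q then z t - 1 else z t

lemma tight_union_aux (f : Finset R → ℕ) (hsub : Submodular f) {z : R → ℕ} (hz : Feas f z)
    {A B : Finset R} (hA : ∑ r ∈ A, z r = f A) (hB : ∑ r ∈ B, z r = f B) :
    ∑ r ∈ A ∪ B, z r = f (A ∪ B) ∧ ∑ r ∈ A ∩ B, z r = f (A ∩ B) := by
  have h1 := hz (A ∪ B); have h2 := hz (A ∩ B); have h3 := hsub A B
  have h4 := Finset.sum_union_inter (s₁ := A) (s₂ := B) (f := z)
  omega

lemma tight_sup (f : Finset R → ℕ) (hsub : Submodular f) (hf0 : f ∅ = 0) {z : R → ℕ}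
    (hz : Feas f z) (F : Finset (Finset R)) (hF : ∀ U ∈ F, ∑ r ∈ U, z r = f U) :
    ∑ r ∈ F.sup id, z r = f (F.sup id) := by
  induction F using Finset.induction_on with
  | empty => simpa using hf0.symm
  | @insert A F hA ih =>
    rw [Finset.sup_insert]
    have h1 : ∑ r ∈ (F.sup id), z r = f (F.sup id) :=
      ih (fun U hU => hF U (Finset.mem_insert_of_mem hU))
    have h2 := hF A (Finset.mem_insert_self A F)
    exact (tight_union_aux f hsub hz h2 h1).1

lemma tight_inf (f : Finset R → ℕ) (hsub : Submodular f) {z : R → ℕ}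
    (hz : Feas f z) (F : Finset (Finset R)) (hne : F.Nonempty)
    (hF : ∀ U ∈ F, ∑ r ∈ U, z r = f U) :
    ∑ r ∈ F.inf id, z r = f (F.inf id) := by
  induction hne using Finset.Nonempty.cons_induction with
  | singleton A => simpa using hF A (by simp)
  | cons A F hA hne ih =>
    rw [Finset.inf_cons]
    have h1 : ∑ r ∈ (F.inf id), z r = f (F.inf id) :=
      ih (fun U hU => hF U (Finset.mem_cons_of_mem hU))
    have h2 := hF A (Finset.mem_cons_self A F)
    exact (tight_union_aux f hsub hz h2 h1).2

lemma sum_bump_int (z : R → ℕ) {p q : R} (hpq : p ≠ q) (hq : 1 ≤ z q) (U : Finset R) :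
    (∑ t ∈ U, (bump z p q t : ℤ)) =
      (∑ t ∈ U, (z t : ℤ)) + (if p ∈ U then 1 else 0) - (if q ∈ U then 1 else 0) := by
  have hterm : ∀ t, (bump z p q t : ℤ) =
      (z t : ℤ) + (if t = p then 1 else 0) - (if t = q then 1 else 0) := by
    intro t
    unfold bump
    by_cases h1 : t = p
    · subst h1; rw [if_pos rfl, if_pos rfl, if_neg hpq]; push_cast; ring
    · rw [if_neg h1, if_neg h1]
      by_cases h2 : t = q
      · subst h2; rw [if_pos rfl, if_pos rfl]
        have : ((z t - 1 : ℕ) : ℤ) = (z t : ℤ) - 1 := by omega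
        rw [this]; ring
      · rw [if_neg h2, if_neg h2]; ring
  rw [Finset.sum_congr rfl (fun t _ => hterm t)]
  rw [Finset.sum_sub_distrib, Finset.sum_add_distrib,
    Finset.sum_ite_eq' U p (fun _ => (1 : ℤ)), Finset.sum_ite_eq' U q (fun _ => (1 : ℤ))]

lemma sum_bump_univ (z : R → ℕ) {p q : R} (hpq : p ≠ q) (hq : 1 ≤ z q) :
    ∑ t, bump z p q t = ∑ t, z t := by
  have h := sum_bump_int z hpq hq Finset.univ
  simp only [Finset.mem_univ, if_pos] at h
  have h2 : ((∑ t, bump z p q t : ℕ) : ℤ) = ((∑ t, z t : ℕ) : ℤ) := by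
    push_cast
    omega
  exact_mod_cast h2

lemma feas_bump {f : Finset R → ℕ} {z : R → ℕ} (hz : Feas f z) {p q : R}
    (hpq : p ≠ q) (hq : 1 ≤ z q)
    (hkey : ∀ U : Finset R, p ∈ U → q ∉ U → ∑ t ∈ U, z t + 1 ≤ f U) :
    Feas f (bump z p q) := by
  intro U
  have h := sum_bump_int z hpq hq U
  have hcast : ((∑ t ∈ U, bump z p q t : ℕ) : ℤ) = ∑ t ∈ U, (bump z p q t : ℤ) := by push_cast; rfl
  have hcast2 : ((∑ t ∈ U, z t : ℕ) : ℤ) = ∑ t ∈ U, (z t : ℤ) := by push_cast; rfl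
  have hU := hz U
  by_cases hp : p ∈ U
  · by_cases hq' : q ∈ U
    · rw [if_pos hp, if_pos hq'] at h; omega
    · have := hkey U hp hq'
      rw [if_pos hp, if_neg hq'] at h
      omega
  · have : (if q ∈ U then (1:ℤ) else 0) = 0 ∨ (if q ∈ U then (1:ℤ) else 0) = 1 := by
      split <;> simp
    rw [if_neg hp] at h
    rcases this with h' | h' <;> omega
end Aux

section Aux2
variable {R : Type*} [Fintype R] [DecidableEq R]

/-- Key exchange lemma: `x ∈ B(d)`, `y ∈ B(d+1)`, `y s < x s` gives `r` with `x r < y r`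
such that both `y + e_s - e_r` and `x + e_r - e_s` are feasible. -/
lemma exchange (f : Finset R → ℕ) (hf : IsPolymatroidRank f) {x y : R → ℕ} {d : ℕ}
    (hx : Feas f x) (hy : Feas f y) (hxs : ∑ t, x t = d) (hys : ∑ t, y t = d + 1)
    {s : R} (hs : y s < x s) :
    ∃ r, r ≠ s ∧ x r < y r ∧ Feas f (bump y s r) ∧ Feas f (bump x r s) := by
  classical
  obtain ⟨hsub, hmon, hf0⟩ := hf
  set Fam : Finset (Finset R) :=
    Finset.univ.powerset.filter (fun U => (∑ t ∈ U, x t = f U) ∧ s ∉ U) with hFamdef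
  set S : Finset R := Fam.sup id with hSdef
  have hStight : ∑ t ∈ S, x t = f S := by
    apply tight_sup f hsub hf0 hx
    intro U hU
    exact (Finset.mem_filter.mp hU).2.1
  have hsS : s ∉ S := by
    intro h
    obtain ⟨U, hU, hUm⟩ := Finset.mem_sup.mp h
    exact (Finset.mem_filter.mp hU).2.2 hUm
  have hSmem : ∀ U : Finset R, (∑ t ∈ U, x t = f U) → s ∉ U → U ⊆ S := by
    intro U h1 h2
    exact Finset.le_sup (f := id) (Finset.mem_filter.mpr
      ⟨Finset.mem_powerset.mpr (Finset.subset_univ U), h1, h2⟩)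
  have hxs1 : 1 ≤ x s := by omega
  have hxbump : ∀ r, r ∉ S → r ≠ s → x r < y r → Feas f (bump x r s) := by
    intro r hr hrs _
    apply feas_bump hx hrs hxs1
    intro U hpU hqU
    rcases lt_or_eq_of_le (hx U) with h | h
    · omega
    · exact absurd ((hSmem U h hqU) hpU) hr
  by_cases hT : ∃ U : Finset R, (∑ t ∈ U, y t = f U) ∧ s ∈ U
  · -- Case B: a y-tight set contains s
    set FamT : Finset (Finset R) :=
      Finset.univ.powerset.filter (fun U => (∑ t ∈ U, y t = f U) ∧ s ∈ U) with hFamT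
    obtain ⟨U₀, hU₀t, hU₀s⟩ := hT
    have hne : FamT.Nonempty :=
      ⟨U₀, Finset.mem_filter.mpr ⟨Finset.mem_powerset.mpr (Finset.subset_univ _), hU₀t, hU₀s⟩⟩
    set T : Finset R := FamT.inf id with hTdef
    have hTtight : ∑ t ∈ T, y t = f T := by
      apply tight_inf f hsub hy FamT hne
      intro U hU
      exact (Finset.mem_filter.mp hU).2.1
    have hTmin : ∀ U : Finset R, (∑ t ∈ U, y t = f U) → s ∈ U → T ⊆ U := by
      intro U h1 h2
      exact Finset.inf_le (f := id) (Finset.mem_filter.mpr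
        ⟨Finset.mem_powerset.mpr (Finset.subset_univ U), h1, h2⟩)
    have hsT : s ∈ T := by
      rw [hTdef, Finset.mem_inf]
      intro U hU
      exact (Finset.mem_filter.mp hU).2.2
    -- counting argument on W = T \ S
    set W : Finset R := T \ S with hWdef
    have h1 : ∑ t ∈ T ∩ S, y t ≤ f (T ∩ S) := hy _
    have h2 : ∑ t ∈ T ∪ S, x t ≤ f (T ∪ S) := hx _
    have h3 := hsub T S
    have e1 := Finset.sum_inter_add_sum_sdiff T S y
    have e2 : ∑ t ∈ (T ∪ S) \ S, x t + ∑ t ∈ S, x t = ∑ t ∈ T ∪ S, x t :=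
      Finset.sum_sdiff Finset.subset_union_right
    rw [Finset.union_sdiff_right] at e2
    have e1x := Finset.sum_inter_add_sum_sdiff T S x
    have hxTS : ∑ t ∈ T ∩ S, x t ≤ f (T ∩ S) := hx _
    have hW : ∑ t ∈ W, x t ≤ ∑ t ∈ W, y t := by
      rw [hWdef]
      omega
    have hsW : s ∈ W := Finset.mem_sdiff.mpr ⟨hsT, hsS⟩
    have e3 := Finset.sum_erase_add W x hsW
    have e4 := Finset.sum_erase_add W y hsW
    have hlt : ∑ t ∈ W.erase s, x t < ∑ t ∈ W.erase s, y t := by omega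
    have hex : ∃ r ∈ W.erase s, x r < y r := by
      by_contra hcon
      push_neg at hcon
      exact absurd (Finset.sum_le_sum (fun i hi => hcon i hi)) (not_le.mpr hlt)
    obtain ⟨r, hrW, hrlt⟩ := hex
    have hrs : r ≠ s := (Finset.mem_erase.mp hrW).1
    have hrW' := (Finset.mem_erase.mp hrW).2
    have hrT : r ∈ T := (Finset.mem_sdiff.mp hrW').1
    have hrS : r ∉ S := (Finset.mem_sdiff.mp hrW').2
    refine ⟨r, hrs, hrlt, ?_, hxbump r hrS hrs hrlt⟩
    apply feas_bump hy (Ne.symm hrs) (by omega : 1 ≤ y r)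
    intro U hsU hrU
    rcases lt_or_eq_of_le (hy U) with h | h
    · omega
    · exact absurd ((hTmin U h hsU) hrT) hrU
  · -- Case A: no y-tight set contains s
    push_neg at hT
    set W : Finset R := Finset.univ \ S with hWdef
    have e2 : ∑ t ∈ W, x t + ∑ t ∈ S, x t = d := by
      rw [hWdef, Finset.sum_sdiff (Finset.subset_univ S)]
      exact hxs
    have e1 : ∑ t ∈ W, y t + ∑ t ∈ S, y t = d + 1 := by
      rw [hWdef, Finset.sum_sdiff (Finset.subset_univ S)]
      exact hys
    have h1 : ∑ t ∈ S, y t ≤ f S := hy _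
    have hW : ∑ t ∈ W, x t < ∑ t ∈ W, y t := by omega
    have hsW : s ∈ W := Finset.mem_sdiff.mpr ⟨Finset.mem_univ s, hsS⟩
    have e3 := Finset.sum_erase_add W x hsW
    have e4 := Finset.sum_erase_add W y hsW
    have hlt : ∑ t ∈ W.erase s, x t < ∑ t ∈ W.erase s, y t := by omega
    have hex : ∃ r ∈ W.erase s, x r < y r := by
      by_contra hcon
      push_neg at hcon
      exact absurd (Finset.sum_le_sum (fun i hi => hcon i hi)) (not_le.mpr hlt)
    obtain ⟨r, hrW, hrlt⟩ := hex
    have hrs : r ≠ s := (Finset.mem_erase.mp hrW).1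
    have hrS : r ∉ S := (Finset.mem_sdiff.mp (Finset.mem_erase.mp hrW).2).2
    refine ⟨r, hrs, hrlt, ?_, hxbump r hrS hrs hrlt⟩
    apply feas_bump hy (Ne.symm hrs) (by omega : 1 ≤ y r)
    intro U hsU hrU
    rcases lt_or_eq_of_le (hy U) with h | h
    · omega
    · exact absurd hsU (hT U h)

/-- Augmentation: feasibility of one more unit. -/
lemma augment (f : Finset R → ℕ) (hf : IsPolymatroidRank f) {x : R → ℕ} {d : ℕ}
    (hx : Feas f x) (hxs : ∑ t, x t = d) (hd : d + 1 ≤ f Finset.univ) :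
    ∃ z, Feas f z ∧ ∑ t, z t = d + 1 := by
  classical
  obtain ⟨hsub, hmon, hf0⟩ := hf
  set Fam : Finset (Finset R) :=
    Finset.univ.powerset.filter (fun U => ∑ t ∈ U, x t = f U) with hFamdef
  set S : Finset R := Fam.sup id with hSdef
  have hStight : ∑ t ∈ S, x t = f S := by
    apply tight_sup f hsub hf0 hx
    intro U hU
    exact (Finset.mem_filter.mp hU).2
  have hSmem : ∀ U : Finset R, (∑ t ∈ U, x t = f U) → U ⊆ S := by
    intro U h1
    exact Finset.le_sup (f := id) (Finset.mem_filter.mpr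
      ⟨Finset.mem_powerset.mpr (Finset.subset_univ U), h1⟩)
  have hSne : S ≠ Finset.univ := by
    intro h
    rw [h] at hStight
    omega
  obtain ⟨r, hr⟩ : ∃ r, r ∉ S := by
    by_contra h
    push_neg at h
    exact hSne (Finset.eq_univ_iff_forall.mpr h)
  refine ⟨fun t => if t = r then x t + 1 else x t, ?_, ?_⟩
  · intro U
    have h' : ∑ t ∈ U, (if t = r then x t + 1 else x t)
        = ∑ t ∈ U, x t + (if r ∈ U then 1 else 0) := by
      have : ∀ t, (if t = r then x t + 1 else x t) = x t + (if t = r then 1 else 0) := by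
        intro t; split <;> simp
      rw [Finset.sum_congr rfl (fun t _ => this t), Finset.sum_add_distrib,
        Finset.sum_ite_eq' U r (fun _ => 1)]
    rw [h']
    by_cases hrU : r ∈ U
    · rw [if_pos hrU]
      rcases lt_or_eq_of_le (hx U) with h | h
      · omega
      · exact absurd ((hSmem U h) hrU) hr
    · rw [if_neg hrU]
      simpa using hx U
  · have h' : ∑ t : R, (if t = r then x t + 1 else x t)
        = ∑ t : R, x t + (if r ∈ Finset.univ then 1 else 0) := by
      have : ∀ t, (if t = r then x t + 1 else x t) = x t + (if t = r then 1 else 0) := by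
        intro t; split <;> simp
      rw [Finset.sum_congr rfl (fun t _ => this t), Finset.sum_add_distrib,
        Finset.sum_ite_eq' Finset.univ r (fun _ => 1)]
    rw [h', if_pos (Finset.mem_univ r), hxs]
end Aux2

/-- Marginal cost `Δ_t(k) = c_t(a_t+k)·k − c_t(a_t+k−1)·(k−1)`. -/
def dmarg {R : Type*} (a : R → ℕ) (c : R → ℕ → ℕ) (t : R) (k : ℕ) : ℤ :=
  (c t (a t + k) : ℤ) * (k : ℤ) - (c t (a t + k - 1) : ℤ) * ((k : ℤ) - 1)

lemma cost_bump {R : Type*} [Fintype R] [DecidableEq R] (a : R → ℕ) (c : R → ℕ → ℕ)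
    (z : R → ℕ) {p q : R} (hpq : p ≠ q) (hq : 1 ≤ z q) :
    (∑ t, (c t (a t + bump z p q t) : ℤ) * (bump z p q t : ℤ)) =
      (∑ t, (c t (a t + z t) : ℤ) * (z t : ℤ)) + dmarg a c p (z p + 1) - dmarg a c q (z q) := by
  have hterm : ∀ t, (c t (a t + bump z p q t) : ℤ) * (bump z p q t : ℤ) =
      (c t (a t + z t) : ℤ) * (z t : ℤ) + (if t = p then dmarg a c p (z p + 1) else 0)
        - (if t = q then dmarg a c q (z q) else 0) := by
    intro t
    unfold bump dmarg
    by_cases h1 : t = p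
    · subst h1
      rw [if_pos rfl, if_pos rfl, if_neg hpq]
      have h2 : a t + (z t + 1) - 1 = a t + z t := by omega
      rw [h2]
      push_cast
      ring
    · rw [if_neg h1, if_neg h1]
      by_cases h2 : t = q
      · subst h2
        rw [if_pos rfl, if_pos rfl]
        have h3 : a t + (z t - 1) = a t + z t - 1 := by omega
        have h4 : ((z t - 1 : ℕ) : ℤ) = (z t : ℤ) - 1 := by omega
        rw [h3, h4]
        ring
      · rw [if_neg h2, if_neg h2]
        ring
  rw [Finset.sum_congr rfl (fun t _ => hterm t), Finset.sum_sub_distrib, Finset.sum_add_distrib,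
    Finset.sum_ite_eq' Finset.univ p (fun _ => dmarg a c p (z p + 1)),
    Finset.sum_ite_eq' Finset.univ q (fun _ => dmarg a c q (z q)),
    if_pos (Finset.mem_univ p), if_pos (Finset.mem_univ q)]

/-- (Demand Increase) If `x` minimizes `C_a` over `B_f(d)` and `d + 1 ≤ f(R)`, then some
minimizer `y` of `C_a` over `B_f(d+1)` satisfies `H(x, y) = 1`. -/
theorem demand_increase
    {R : Type*} [Fintype R] [Nonempty R] [DecidableEq R]
    (f : Finset R → ℕ) (hf : IsPolymatroidRank f)
    (a : R → ℕ) (c : R → ℕ → ℕ)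
    (hmono : ∀ r, Monotone (c r))
    (hssc : ∀ r, TruncStronglySemiConvex (f {r}) (c r))
    (d : ℕ) (hd : d + 1 ≤ f Finset.univ)
    (x : R → ℕ) (hx : x ∈ basePolyhedron f d)
    (hxmin : ∀ z ∈ basePolyhedron f d,
      ∑ r, c r (a r + x r) * x r ≤ ∑ r, c r (a r + z r) * z r) :
    ∃ y ∈ basePolyhedron f (d + 1),
      (∀ z ∈ basePolyhedron f (d + 1),
        ∑ r, c r (a r + y r) * y r ≤ ∑ r, c r (a r + z r) * z r) ∧
      natHamming x y = 1 := by
  classical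
  obtain ⟨hxfeas, hxsum⟩ := hx
  have hxF : Feas f x := hxfeas
  -- the finite candidate set for B_f(d+1)
  set S0 : Finset (R → ℕ) :=
    ((Finset.univ : Finset (R → Fin (d + 2))).image (fun g t => (g t : ℕ))).filter
      (fun z => z ∈ basePolyhedron f (d + 1)) with hS0
  have hS0mem : ∀ z, z ∈ S0 ↔ z ∈ basePolyhedron f (d + 1) := by
    intro z
    rw [hS0, Finset.mem_filter]
    constructor
    · exact fun h => h.2
    · intro hz
      refine ⟨Finset.mem_image.mpr ⟨fun t => ⟨z t, ?_⟩, Finset.mem_univ _, rfl⟩, hz⟩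
      have h1 : z t ≤ d + 1 := by
        have h2 := Finset.single_le_sum (f := z) (fun i _ => Nat.zero_le _) (Finset.mem_univ t)
        rw [hz.2] at h2
        exact h2
      omega
  have hne : S0.Nonempty := by
    obtain ⟨z, hzf, hzs⟩ := augment f hf hxF hxsum hd
    exact ⟨z, (hS0mem z).mpr ⟨hzf, hzs⟩⟩
  obtain ⟨y₀, hy₀S, hy₀min⟩ :=
    Finset.exists_min_image S0 (fun z => ∑ r, c r (a r + z r) * z r) hne
  set S2 : Finset (R → ℕ) := S0.filter
    (fun z => (∑ r, c r (a r + z r) * z r) = ∑ r, c r (a r + y₀ r) * y₀ r) with hS2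
  have hy₀S2 : y₀ ∈ S2 := Finset.mem_filter.mpr ⟨hy₀S, rfl⟩
  obtain ⟨y, hyS2, hymin⟩ := Finset.exists_min_image S2 (natHamming x) ⟨y₀, hy₀S2⟩
  have hyS0 : y ∈ S0 := (Finset.mem_filter.mp hyS2).1
  have hyC : (∑ r, c r (a r + y r) * y r) = ∑ r, c r (a r + y₀ r) * y₀ r :=
    (Finset.mem_filter.mp hyS2).2
  have hyB : y ∈ basePolyhedron f (d + 1) := (hS0mem y).mp hyS0
  have hymin' : ∀ z ∈ basePolyhedron f (d + 1),
      (∑ r, c r (a r + y r) * y r) ≤ ∑ r, c r (a r + z r) * z r := by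
    intro z hz
    rw [hyC]
    exact hy₀min z ((hS0mem z).mpr hz)
  refine ⟨y, hyB, hymin', ?_⟩
  have hle : ∀ t, x t ≤ y t := by
    by_contra hcon
    push_neg at hcon
    obtain ⟨s, hs⟩ := hcon
    obtain ⟨r, hrs, hrlt, hyb, hxb⟩ := exchange f hf hxF hyB.1 hxsum hyB.2 hs
    have hsr : s ≠ r := fun h => hrs h.symm
    have hyr1 : 1 ≤ y r := by omega
    have hxs1 : 1 ≤ x s := by omega
    have hy'B : bump y s r ∈ basePolyhedron f (d + 1) :=
      ⟨hyb, by rw [sum_bump_univ y hsr hyr1, hyB.2]⟩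
    have hx'B : bump x r s ∈ basePolyhedron f d :=
      ⟨hxb, by rw [sum_bump_univ x hrs hxs1, hxsum]⟩
    -- Hamming distance strictly decreases under the exchange
    have hH : natHamming x (bump y s r) < natHamming x y := by
      unfold natHamming
      apply Finset.sum_lt_sum
      · intro t _
        unfold bump
        by_cases h1 : t = s
        · subst h1
          rw [if_pos rfl]
          omega
        · rw [if_neg h1]
          by_cases h2 : t = r
          · subst h2
            rw [if_pos rfl]
            omega
          · rw [if_neg h2]
      · refine ⟨s, Finset.mem_univ s, ?_⟩
        unfold bump
        rw [if_pos rfl]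
        omega
    -- strict cost increase for the modified y
    have hCle : (∑ t, c t (a t + y t) * y t) ≤
        ∑ t, c t (a t + bump y s r t) * bump y s r t := hymin' _ hy'B
    have hCne : (∑ t, c t (a t + bump y s r t) * bump y s r t) ≠
        ∑ t, c t (a t + y t) * y t := by
      intro h
      have hmem : bump y s r ∈ S2 :=
        Finset.mem_filter.mpr ⟨(hS0mem _).mpr hy'B, h.trans hyC⟩
      exact absurd (hymin _ hmem) (not_le.mpr hH)
    have hClt : (∑ t, c t (a t + y t) * y t) <
        ∑ t, c t (a t + bump y s r t) * bump y s r t :=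
      lt_of_le_of_ne hCle (fun h => hCne h.symm)
    have hxle : (∑ t, c t (a t + x t) * x t) ≤
        ∑ t, c t (a t + bump x r s t) * bump x r s t := hxmin _ hx'B
    -- cast to ℤ and use the cost difference formulas
    have hyint := cost_bump a c y hsr hyr1
    have hxint := cost_bump a c x hrs hxs1
    have hcast1 : ((∑ t, c t (a t + bump y s r t) * bump y s r t : ℕ) : ℤ)
        = ∑ t, (c t (a t + bump y s r t) : ℤ) * (bump y s r t : ℤ) := by
      push_cast; rfl
    have hcast2 : ((∑ t, c t (a t + y t) * y t : ℕ) : ℤ)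
        = ∑ t, (c t (a t + y t) : ℤ) * (y t : ℤ) := by push_cast; rfl
    have hcast3 : ((∑ t, c t (a t + bump x r s t) * bump x r s t : ℕ) : ℤ)
        = ∑ t, (c t (a t + bump x r s t) : ℤ) * (bump x r s t : ℤ) := by
      push_cast; rfl
    have hcast4 : ((∑ t, c t (a t + x t) * x t : ℕ) : ℤ)
        = ∑ t, (c t (a t + x t) : ℤ) * (x t : ℤ) := by push_cast; rfl
    have hCltZ : ((∑ t, c t (a t + y t) * y t : ℕ) : ℤ)
        < ((∑ t, c t (a t + bump y s r t) * bump y s r t : ℕ) : ℤ) := by exact_mod_cast hClt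
    have hxleZ : ((∑ t, c t (a t + x t) * x t : ℕ) : ℤ)
        ≤ ((∑ t, c t (a t + bump x r s t) * bump x r s t : ℕ) : ℤ) := by exact_mod_cast hxle
    rw [hcast2, hcast1, hyint] at hCltZ
    rw [hcast4, hcast3, hxint] at hxleZ
    -- monotonicity of marginal costs
    have hxsf : x s ≤ f {s} := by simpa using hxfeas {s}
    have hyrf : y r ≤ f {r} := by simpa using hyB.1 {r}
    have hm1 : dmarg a c s (y s + 1) ≤ dmarg a c s (x s) := by
      unfold dmarg
      exact hssc s (a s) (a s) (y s + 1) (x s) (by omega) (by omega) hxsf le_rfl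
    have hm2 : dmarg a c r (x r + 1) ≤ dmarg a c r (y r) := by
      unfold dmarg
      exact hssc r (a r) (a r) (x r + 1) (y r) (by omega) (by omega) hyrf le_rfl
    linarith
  -- conclude `natHamming x y = 1`
  have hterm : ∀ t, (((x t : ℤ) - y t).natAbs : ℤ) = (y t : ℤ) - x t := by
    intro t
    have := hle t
    omega
  have h1 : (natHamming x y : ℤ) = ∑ t, ((y t : ℤ) - x t) := by
    unfold natHamming
    rw [Nat.cast_sum]
    exact Finset.sum_congr rfl (fun t _ => hterm t)
  rw [Finset.sum_sub_distrib] at h1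
  have h2 : (∑ t, (y t : ℤ)) = (d : ℤ) + 1 := by
    rw [← Nat.cast_sum, hyB.2]
    push_cast
    ring
  have h3 : (∑ t, (x t : ℤ)) = (d : ℤ) := by
    rw [← Nat.cast_sum, hxsum]
  have : (natHamming x y : ℤ) = 1 := by rw [h1, h2, h3]; ring
  exact_mod_cast this
end

section
/- Let w : E → ℝ be admissible, let k ∈ ℕ, and suppose F is of minimal w-weight in 𝓕(k) and that 𝓕(k+1) is nonempty. Then there exists e ∈ E \ F such that F + e = F ∪ {e} is of minimal w-weight in 𝓕(k+1). -/
/-- The ground set `E`: the disjoint union of the chains `K_r`, where the chain `K_r` has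
`u_r = f({r})` elements, represented by `Fin (f {r})` (ordered by the order of `Fin`);
two elements are comparable iff they lie in the same chain. -/
abbrev Ground {R : Type*} [DecidableEq R] (f : Finset R → ℕ) : Type _ :=
  Σ r : R, Fin (f {r})

/-- The partial order `≼` on `E`: `x ≼ y` iff `x` and `y` lie in the same chain and `x` is
below or equal to `y` there. -/
def PrecEq {R : Type*} [DecidableEq R] (f : Finset R → ℕ) (x y : Ground f) : Prop :=
  x.1 = y.1 ∧ x.2.val ≤ y.2.val

/-- `F ⊆ E` is an ideal of the poset `P = (E, ≼)`. -/
def IsIdeal {R : Type*} [DecidableEq R] (f : Finset R → ℕ) (F : Finset (Ground f)) : Prop :=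
  ∀ (r : R) (i j : Fin (f {r})), i ≤ j → (⟨r, j⟩ : Ground f) ∈ F → (⟨r, i⟩ : Ground f) ∈ F

/-- The family `𝓕` of ideals `F` of `P` with `|F ∩ ⋃_{r∈U} K_r| ≤ f U` for all `U ⊆ R`. -/
def MemF {R : Type*} [Fintype R] [DecidableEq R] (f : Finset R → ℕ)
    (F : Finset (Ground f)) : Prop :=
  IsIdeal f F ∧ ∀ U : Finset R, (F.filter fun e => e.1 ∈ U).card ≤ f U

/-- The family `𝓕(k)` of members of `𝓕` of cardinality `k`. -/
def MemFk {R : Type*} [Fintype R] [DecidableEq R] (f : Finset R → ℕ) (k : ℕ)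
    (F : Finset (Ground f)) : Prop :=
  MemF f F ∧ F.card = k

/-- A weight function `w : E → ℝ` is admissible if `e ≼ g` implies `w e ≤ w g`. -/
def Admissible {R : Type*} [DecidableEq R] (f : Finset R → ℕ) (w : Ground f → ℝ) : Prop :=
  ∀ (r : R) (i j : Fin (f {r})), i ≤ j → w ⟨r, i⟩ ≤ w ⟨r, j⟩

/-- `F` is of minimal `w`-weight in `𝓕(k)`. -/
def MinWeight {R : Type*} [Fintype R] [DecidableEq R] (f : Finset R → ℕ) (k : ℕ)
    (w : Ground f → ℝ) (F : Finset (Ground f)) : Prop :=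
  MemFk f k F ∧ ∀ F' : Finset (Ground f), MemFk f k F' → ∑ e ∈ F, w e ≤ ∑ e ∈ F', w e

section Helpers

set_option linter.unusedSectionVars false
variable {R : Type*} [Fintype R] [DecidableEq R] (f : Finset R → ℕ)

/-- number of elements of `A` lying in chains indexed by `U` -/
def cnt (A : Finset (Ground f)) (U : Finset R) : ℕ :=
  (A.filter fun e => e.1 ∈ U).card

lemma cnt_empty (A : Finset (Ground f)) : cnt f A ∅ = 0 := by
  simp [cnt]

lemma cnt_modular (A : Finset (Ground f)) (U V : Finset R) :
    cnt f A (U ∪ V) + cnt f A (U ∩ V) = cnt f A U + cnt f A V := by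
  unfold cnt
  have h1 : (A.filter fun e => e.1 ∈ U ∪ V)
      = (A.filter fun e => e.1 ∈ U) ∪ (A.filter fun e => e.1 ∈ V) := by
    ext a; simp [Finset.mem_filter, Finset.mem_union]; tauto
  have h2 : (A.filter fun e => e.1 ∈ U ∩ V)
      = (A.filter fun e => e.1 ∈ U) ∩ (A.filter fun e => e.1 ∈ V) := by
    ext a; simp [Finset.mem_filter, Finset.mem_inter]; tauto
  rw [h1, h2, Finset.card_union_add_card_inter]

lemma cnt_insert (A : Finset (Ground f)) (e : Ground f) (he : e ∉ A) (U : Finset R) :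
    cnt f (insert e A) U = cnt f A U + (if e.1 ∈ U then 1 else 0) := by
  unfold cnt
  rw [Finset.filter_insert]
  split
  · rw [Finset.card_insert_of_notMem (by simp [Finset.mem_filter, he])]
  · simp

lemma tight_union (hf : IsPolymatroidRank f) (A : Finset (Ground f))
    (hA : ∀ U, cnt f A U ≤ f U) (U V : Finset R)
    (hU : cnt f A U = f U) (hV : cnt f A V = f V) :
    cnt f A (U ∪ V) = f (U ∪ V) := by
  have hsub := hf.1 U V
  have hm := cnt_modular f A U V
  have h1 := hA (U ∪ V)
  have h2 := hA (U ∩ V)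
  omega

lemma exchange_s7 (hf : IsPolymatroidRank f) (A B : Finset (Ground f))
    (hA : ∀ U, cnt f A U ≤ f U) (hB : ∀ U, cnt f B U ≤ f U)
    (hcard : A.card < B.card) :
    ∃ e ∈ B, e ∉ A ∧ ∀ U, cnt f (insert e A) U ≤ f U := by
  classical
  by_contra hcon
  push_neg at hcon
  -- for each e ∈ B \ A there is a tight set containing e.1
  have hUe : ∀ e ∈ B \ A, ∃ U : Finset R, e.1 ∈ U ∧ cnt f A U = f U := by
    intro e he
    rw [Finset.mem_sdiff] at he
    obtain ⟨U, hU⟩ := hcon e he.1 he.2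
    rw [cnt_insert f A e he.2 U] at hU
    by_cases h : e.1 ∈ U
    · refine ⟨U, h, ?_⟩
      have := hA U
      simp [h] at hU
      omega
    · simp [h] at hU
      exact absurd (hA U) (by omega)
  -- union up a tight set containing all chains of B \ A
  have hT : ∀ S : Finset (Ground f), S ⊆ B \ A →
      ∃ T : Finset R, cnt f A T = f T ∧ ∀ e ∈ S, e.1 ∈ T := by
    intro S
    induction S using Finset.induction_on with
    | empty => intro _; exact ⟨∅, by rw [cnt_empty, hf.2.2], by simp⟩
    | @insert a S ha ih =>
      intro hsub
      obtain ⟨T, hT1, hT2⟩ := ih (fun x hx => hsub (Finset.mem_insert_of_mem hx))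
      obtain ⟨U, hU1, hU2⟩ := hUe a (hsub (Finset.mem_insert_self a S))
      refine ⟨U ∪ T, tight_union f hf A hA U T hU2 hT1, ?_⟩
      intro e he
      rcases Finset.mem_insert.1 he with rfl | he
      · exact Finset.mem_union_left _ hU1
      · exact Finset.mem_union_right _ (hT2 e he)
  obtain ⟨T, hT1, hT2⟩ := hT (B \ A) le_rfl
  -- counting contradiction
  have hBA : cnt f (B \ A) T = (B \ A).card :=
    congrArg Finset.card (Finset.filter_true_of_mem hT2)
  have hsplitB : cnt f B T = cnt f (B \ A) T + cnt f (B ∩ A) T := by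
    unfold cnt
    rw [← Finset.card_union_of_disjoint (Finset.disjoint_filter_filter
      (Finset.disjoint_sdiff_inter B A)), ← Finset.filter_union,
      Finset.sdiff_union_inter]
  have hsplitA : cnt f A T = cnt f (A \ B) T + cnt f (A ∩ B) T := by
    unfold cnt
    rw [← Finset.card_union_of_disjoint (Finset.disjoint_filter_filter
      (Finset.disjoint_sdiff_inter A B)), ← Finset.filter_union,
      Finset.sdiff_union_inter]
  have hcomm : cnt f (B ∩ A) T = cnt f (A ∩ B) T := by rw [Finset.inter_comm]
  have h1 : cnt f B T ≤ f T := hB T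
  have h2 : cnt f (A \ B) T ≤ (A \ B).card := Finset.card_filter_le _ _
  have h3 : (B \ A).card + (B ∩ A).card = B.card := Finset.card_sdiff_add_card_inter B A
  have h4 : (A \ B).card + (A ∩ B).card = A.card := Finset.card_sdiff_add_card_inter A B
  have h5 : (B ∩ A).card = (A ∩ B).card := by rw [Finset.inter_comm]
  omega

end Helpers

section Repair
set_option linter.unusedSectionVars false
variable {R : Type*} [Fintype R] [DecidableEq R] (f : Finset R → ℕ)

lemma repair (A : Finset (Ground f)) (hAI : IsIdeal f A) (r : R) (i : Fin (f {r}))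
    (hi : (⟨r, i⟩ : Ground f) ∉ A)
    (hcnt : ∀ U, cnt f (insert (⟨r, i⟩ : Ground f) A) U ≤ f U) :
    ∃ i' : Fin (f {r}), i' ≤ i ∧ (⟨r, i'⟩ : Ground f) ∉ A ∧
      IsIdeal f (insert (⟨r, i'⟩ : Ground f) A) ∧
      ∀ U, cnt f (insert (⟨r, i'⟩ : Ground f) A) U ≤ f U := by
  classical
  set Sr := Finset.univ.filter (fun j : Fin (f {r}) => (⟨r, j⟩ : Ground f) ∉ A) with hSr
  have hiS : i ∈ Sr := by simp [hSr, hi]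
  set i' := Sr.min' ⟨i, hiS⟩ with hi'
  have hi'S : i' ∈ Sr := Sr.min'_mem ⟨i, hiS⟩
  have hi'notmem : (⟨r, i'⟩ : Ground f) ∉ A := by
    have := Finset.mem_filter.1 hi'S; exact this.2
  have hi'le : i' ≤ i := Sr.min'_le i hiS
  have hbelow : ∀ a : Fin (f {r}), a < i' → (⟨r, a⟩ : Ground f) ∈ A := by
    intro a ha
    by_contra hna
    have : a ∈ Sr := by simp [hSr, hna]
    exact absurd (Sr.min'_le a this) (not_le.2 ha)
  refine ⟨i', hi'le, hi'notmem, ?_, ?_⟩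
  · intro r' a b hab hb
    rcases Finset.mem_insert.1 hb with hb | hb
    · obtain ⟨h1, h2⟩ := Sigma.mk.inj_iff.1 hb
      subst h1
      have hb2 : b = i' := eq_of_heq h2
      subst hb2
      rcases lt_or_eq_of_le hab with h | h
      · exact Finset.mem_insert_of_mem (hbelow a h)
      · subst h; exact Finset.mem_insert_self _ _
    · exact Finset.mem_insert_of_mem (hAI r' a b hab hb)
  · intro U
    have h := hcnt U
    rw [cnt_insert f A _ hi U] at h
    rw [cnt_insert f A _ hi'notmem U]
    simpa using h

end Repair


/-- If `F` is of minimal `w`-weight in `𝓕(k)` for an admissible weight `w`, and `𝓕(k+1)` is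
nonempty, then `F ∪ {e}` is of minimal `w`-weight in `𝓕(k+1)` for some `e ∈ E \ F`. -/
theorem exists_extension_minWeight
    {R : Type*} [Fintype R] [Nonempty R] [DecidableEq R]
    (f : Finset R → ℕ) (hf : IsPolymatroidRank f)
    (w : Ground f → ℝ) (hw : Admissible f w)
    (k : ℕ) (F : Finset (Ground f)) (hF : MinWeight f k w F)
    (hne : ∃ F' : Finset (Ground f), MemFk f (k + 1) F') :
    ∃ e : Ground f, e ∉ F ∧ MinWeight f (k + 1) w (insert e F) := by
  classical
  obtain ⟨hFk, hFmin⟩ := hF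
  -- choose a minimum-weight member of 𝓕(k+1)
  obtain ⟨F0, hF0⟩ := hne
  obtain ⟨F', hF's, hF'min⟩ := Finset.exists_min_image
    (Finset.univ.filter fun F'' => MemFk f (k + 1) F'') (fun F'' => ∑ e ∈ F'', w e)
    ⟨F0, Finset.mem_filter.2 ⟨Finset.mem_univ _, hF0⟩⟩
  have hF'mem : MemFk f (k + 1) F' := (Finset.mem_filter.1 hF's).2
  have hF'min' : ∀ F'' : Finset (Ground f), MemFk f (k + 1) F'' →
      ∑ e ∈ F', w e ≤ ∑ e ∈ F'', w e := fun F'' h =>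
    hF'min F'' (Finset.mem_filter.2 ⟨Finset.mem_univ _, h⟩)
  have hcard : F.card < F'.card := by rw [hFk.2, hF'mem.2]; omega
  -- exchange
  obtain ⟨e0, he0B, he0A, hcnt0⟩ :=
    exchange_s7 f hf F F' (fun U => hFk.1.2 U) (fun U => hF'mem.1.2 U) hcard
  obtain ⟨r, i⟩ := e0
  -- repair to respect the ideal structure
  obtain ⟨i', hi'le, hi'notmem, hIdeal, hcnt'⟩ :=
    repair f F hFk.1.1 r i he0A hcnt0
  have heF' : (⟨r, i'⟩ : Ground f) ∈ F' := hF'mem.1.1 r i' i hi'le he0B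
  -- the top element of chain r in F'
  set jset := Finset.univ.filter (fun j : Fin (f {r}) => (⟨r, j⟩ : Ground f) ∈ F')
    with hjset
  have hij : i ∈ jset := by simp [hjset, he0B]
  set j := jset.max' ⟨i, hij⟩ with hj
  have hjS : j ∈ jset := jset.max'_mem ⟨i, hij⟩
  have hgF' : (⟨r, j⟩ : Ground f) ∈ F' := (Finset.mem_filter.1 hjS).2
  have hji : i ≤ j := jset.le_max' i hij
  have hweg : w ⟨r, i'⟩ ≤ w ⟨r, j⟩ := hw r i' j (le_trans hi'le hji)
  -- F' minus its top element of chain r is in 𝓕(k)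
  have hmemk : MemFk f k (F'.erase ⟨r, j⟩) := by
    refine ⟨⟨?_, ?_⟩, ?_⟩
    · intro r' a b hab hb
      obtain ⟨hbne, hbF'⟩ := Finset.mem_erase.1 hb
      have haF' : (⟨r', a⟩ : Ground f) ∈ F' := hF'mem.1.1 r' a b hab hbF'
      refine Finset.mem_erase.2 ⟨?_, haF'⟩
      intro hag
      obtain ⟨h1, h2⟩ := Sigma.mk.inj_iff.1 hag
      subst h1
      have ha2 : a = j := eq_of_heq h2
      subst ha2
      have hbj : b ∈ jset := by simp [hjset, hbF']
      have : b ≤ j := jset.le_max' b hbj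
      exact hbne (by rw [le_antisymm this hab])
    · intro U
      exact le_trans (Finset.card_le_card
        (Finset.filter_subset_filter _ (Finset.erase_subset _ _))) (hF'mem.1.2 U)
    · rw [Finset.card_erase_of_mem hgF', hF'mem.2]
      omega
  have hwF : ∑ e ∈ F, w e ≤ ∑ e ∈ F'.erase ⟨r, j⟩, w e := hFmin _ hmemk
  -- conclusion
  refine ⟨⟨r, i'⟩, hi'notmem, ⟨⟨hIdeal, fun U => hcnt' U⟩,
    by rw [Finset.card_insert_of_notMem hi'notmem, hFk.2]⟩, ?_⟩
  intro F'' hF''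
  rw [Finset.sum_insert hi'notmem]
  have hsplit : ∑ e ∈ F'.erase ⟨r, j⟩, w e + w ⟨r, j⟩ = ∑ e ∈ F', w e :=
    Finset.sum_erase_add F' w hgF'
  have := hF'min' F'' hF''
  linarith
end

section
/- (Local improvement) Let w : E → ℝ be admissible and suppose F ∈ 𝓕(k) is not of minimal w-weight in 𝓕(k). Then there exist e ∈ F and g ∈ E \ F such that F − e + g = (F \ {e}) ∪ {g} ∈ 𝓕(k) and w(e) > w(g); moreover e can be chosen ≼-maximal in F and g can be chosen ≼-minimal in E \ F. -/
/-!
For an ideal `F` of `P`, `F ∈ 𝓕` says that its count vector `r ↦ |F ∩ K_r|` is an integer point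
of the polymatroid of `f`. Given a lighter `F₁ ∈ 𝓕(k)`, pick `r` where `F₁` has fewer elements
than `F`. The strong exchange property of polymatroids yields `s` such that moving the top of
`F ∩ K_r` to the bottom of `K_s \ F` keeps `F` in `𝓕(k)`, and the reverse move keeps `F₁` in
`𝓕(k)`. If the first move does not decrease `w(F)`, monotonicity of `w` along the chains shows
that the second one does not increase `w(F₁)`, while it brings `F₁` one element closer to `F`;
so induction on `|F \ F₁|` concludes.
-/

section

open Finset

variable {R : Type*} [DecidableEq R] {f : Finset R → ℕ}

/-! Mathlib orders the sigma type `Ground f` as the disjoint sum of the chains: `≤` is `≼`. -/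

lemma isIdeal_iff_isLowerSet {F : Finset (Ground f)} :
    IsIdeal f F ↔ IsLowerSet (F : Set (Ground f)) := by
  constructor
  · rintro hF _ _ ⟨r, i, j, hij⟩ hj
    exact hF r i j hij hj
  · intro hF r i j hij hj
    exact hF (Sigma.mk_le_mk_iff.2 hij) hj

lemma admissible_iff_monotone {w : Ground f → ℝ} : Admissible f w ↔ Monotone w := by
  constructor
  · rintro hw _ _ ⟨r, i, j, hij⟩
    exact hw r i j hij
  · intro hw r i j hij
    exact hw (Sigma.mk_le_mk_iff.2 hij)

lemma Maximal.snd_le_of_mem {F : Finset (Ground f)} {e : Ground f} (he : Maximal (· ∈ F) e)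
    (j : Fin (f {e.1})) (hj : (⟨e.1, j⟩ : Ground f) ∈ F) : j ≤ e.2 := by
  obtain ⟨r, i⟩ := e
  rcases le_total j i with h | h
  · exact h
  · simpa using he.le_of_ge hj (by simpa using h)

lemma Minimal.snd_le_of_notMem {F : Finset (Ground f)} {g : Ground f} (hg : Minimal (· ∉ F) g)
    (j : Fin (f {g.1})) (hj : (⟨g.1, j⟩ : Ground f) ∉ F) : g.2 ≤ j := by
  obtain ⟨r, i⟩ := g
  rcases le_total i j with h | h
  · exact h
  · simpa using hg.le_of_le hj (by simpa using h)

lemma IsLowerSet.insert_diff_singleton {α : Type*} [PartialOrder α] {s : Set α} {a b : α}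
    (hs : IsLowerSet s) (ha : Maximal (· ∈ s) a) (hb : Minimal (· ∉ s) b) (hab : ¬a < b) :
    IsLowerSet (insert b (s \ {a})) := by
  rintro x y hyx (rfl | ⟨hxs, hxa⟩)
  · rcases hyx.lt_or_eq with hlt | rfl
    · have hys : y ∈ s := not_not.1 (hb.not_prop_of_lt hlt)
      exact Or.inr ⟨hys, fun hya => hab (hya ▸ hlt)⟩
    · exact Or.inl rfl
  · refine Or.inr ⟨hs hyx hxs, fun hya => hxa ?_⟩
    rw [Set.mem_singleton_iff] at hya ⊢
    subst hya
    exact (ha.le_of_ge hxs hyx).antisymm hyx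

def InPolymatroid (f : Finset R → ℕ) (x : R → ℕ) : Prop :=
  ∀ U : Finset R, ∑ t ∈ U, x t ≤ f U

def IsTight (f : Finset R → ℕ) (x : R → ℕ) (U : Finset R) : Prop :=
  ∑ t ∈ U, x t = f U

lemma InPolymatroid.isTight_union_inter {x : R → ℕ} (hx : InPolymatroid f x)
    (hf : Submodular f) {A B : Finset R} (hA : IsTight f x A) (hB : IsTight f x B) :
    IsTight f x (A ∪ B) ∧ IsTight f x (A ∩ B) := by
  have hsum : ∑ t ∈ A ∪ B, x t + ∑ t ∈ A ∩ B, x t = ∑ t ∈ A, x t + ∑ t ∈ B, x t :=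
    sum_union_inter
  have := hx (A ∪ B)
  have := hx (A ∩ B)
  have := hf A B
  unfold IsTight at *
  omega

lemma sum_add_sum_lt_of_lt_on_sdiff {x y : R → ℕ} {A B : Finset R} {r : R}
    (hle : ∀ t ∈ B \ A, y t ≤ x t) (hr : r ∈ B \ A) (hlt : y r < x r) :
    ∑ t ∈ A, x t + ∑ t ∈ B, y t < ∑ t ∈ A ∪ B, x t + ∑ t ∈ A ∩ B, y t := by
  have hx : ∑ t ∈ B \ A, x t + ∑ t ∈ A, x t = ∑ t ∈ A ∪ B, x t := by
    rw [← union_sdiff_left, sum_sdiff subset_union_left]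
  have hy : ∑ t ∈ A ∩ B, y t + ∑ t ∈ B \ A, y t = ∑ t ∈ B, y t := by
    rw [inter_comm, sum_inter_add_sum_sdiff]
  have : ∑ t ∈ B \ A, y t < ∑ t ∈ B \ A, x t := sum_lt_sum hle ⟨r, hr, hlt⟩
  omega

/-- Strong exchange: `A` is the largest `x`-tight set avoiding `r` and `B` the smallest `y`-tight
set containing `r` (or `univ` if there is none); submodularity forces `x s < y s` somewhere
on `B \ A`. -/
theorem InPolymatroid.exists_exchange [Fintype R] (hsub : Submodular f) (hf0 : f ∅ = 0)
    {x y : R → ℕ} (hx : InPolymatroid f x) (hy : InPolymatroid f y)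
    (hsum : ∑ t, x t = ∑ t, y t) {r : R} (hr : y r < x r) :
    ∃ s, x s < y s ∧ (∀ U : Finset R, s ∈ U → r ∉ U → ∑ t ∈ U, x t < f U) ∧
      (∀ U : Finset R, r ∈ U → s ∉ U → ∑ t ∈ U, y t < f U) := by
  classical
  set A := ({U | IsTight f x U ∧ r ∉ U} : Finset (Finset R)).sup id
  set B := ({U | IsTight f y U ∧ r ∈ U} : Finset (Finset R)).inf id
  have hA : IsTight f x A ∧ r ∉ A := by
    refine sup_induction (p := fun U => IsTight f x U ∧ r ∉ U)
      ⟨by simp [IsTight, hf0], notMem_empty r⟩ ?_ fun U hU => (mem_filter.1 hU).2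
    rintro U ⟨hU, hrU⟩ V ⟨hV, hrV⟩
    exact ⟨(hx.isTight_union_inter hsub hU hV).1, by simp [hrU, hrV]⟩
  have hB : r ∈ B ∧ (B = univ ∨ IsTight f y B) := by
    refine inf_induction (p := fun U => r ∈ U ∧ (U = univ ∨ IsTight f y U))
      ⟨mem_univ r, Or.inl top_eq_univ⟩ ?_
      fun U hU => ⟨(mem_filter.1 hU).2.2, Or.inr (mem_filter.1 hU).2.1⟩
    rintro U ⟨hrU, rfl | hU⟩ V ⟨hrV, rfl | hV⟩
    · simp
    · exact ⟨mem_inter.2 ⟨hrU, hrV⟩, Or.inr (by simpa using hV)⟩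
    · exact ⟨mem_inter.2 ⟨hrU, hrV⟩, Or.inr (by simpa using hU)⟩
    · exact ⟨mem_inter.2 ⟨hrU, hrV⟩, Or.inr (hy.isTight_union_inter hsub hU hV).2⟩
  have hAB : ∑ t ∈ A ∪ B, x t + ∑ t ∈ A ∩ B, y t ≤ ∑ t ∈ A, x t + ∑ t ∈ B, y t := by
    rcases hB.2 with hBu | hBt
    · rw [hBu, union_eq_right.2 (subset_univ A), inter_univ]
      have := hy A
      unfold IsTight at hA
      omega
    · calc ∑ t ∈ A ∪ B, x t + ∑ t ∈ A ∩ B, y t ≤ f (A ∪ B) + f (A ∩ B) :=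
            add_le_add (hx _) (hy _)
        _ ≤ f A + f B := hsub A B
        _ = ∑ t ∈ A, x t + ∑ t ∈ B, y t := by rw [hA.1, hBt]
  obtain ⟨s, hsBA, hs⟩ : ∃ s ∈ B \ A, x s < y s := by
    by_contra! h
    exact (sum_add_sum_lt_of_lt_on_sdiff h (mem_sdiff.2 ⟨hB.1, hA.2⟩) hr).not_ge hAB
  refine ⟨s, hs, fun U hsU hrU => (hx U).lt_of_ne fun hU => ?_,
    fun U hrU hsU => (hy U).lt_of_ne fun hU => hsU ?_⟩
  · have hUA : U ⊆ A := le_sup (f := id) (mem_filter.2 ⟨mem_univ _, hU, hrU⟩)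
    exact (mem_sdiff.1 hsBA).2 (hUA hsU)
  · exact (inf_le (f := id) (mem_filter.2 ⟨mem_univ _, hU, hrU⟩) : B ⊆ U) (mem_sdiff.1 hsBA).1

def chainCount (F : Finset (Ground f)) (r : R) : ℕ := #{e ∈ F | e.1 = r}

lemma card_filter_fst_mem_eq_sum_chainCount (F : Finset (Ground f)) (U : Finset R) :
    #{e ∈ F | e.1 ∈ U} = ∑ r ∈ U, chainCount F r := by
  rw [card_eq_sum_card_fiberwise (s := {e ∈ F | e.1 ∈ U}) (f := Sigma.fst) (t := U)
    fun e he => (mem_filter.1 he).2]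
  refine sum_congr rfl fun r hr => ?_
  rw [chainCount, filter_filter]
  congr 1
  exact filter_congr fun e _ => ⟨And.right, fun h => ⟨h ▸ hr, h⟩⟩

lemma sum_chainCount [Fintype R] (F : Finset (Ground f)) : ∑ r, chainCount F r = #F := by
  rw [← card_filter_fst_mem_eq_sum_chainCount]
  simp

lemma MemF.inPolymatroid [Fintype R] {F : Finset (Ground f)} (hF : MemF f F) :
    InPolymatroid f (chainCount F) := fun U =>
  card_filter_fst_mem_eq_sum_chainCount F U ▸ hF.2 U

lemma chainCount_lt_of_mem_of_notMem {F F₁ : Finset (Ground f)}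
    (hF : IsLowerSet (F : Set (Ground f))) (hF₁ : IsLowerSet (F₁ : Set (Ground f)))
    {a : Ground f} (haF : a ∈ F) (haF₁ : a ∉ F₁) : chainCount F₁ a.1 < chainCount F a.1 := by
  refine card_lt_card ((ssubset_iff_of_subset fun b hb => ?_).2 ⟨a, ?_, ?_⟩)
  · obtain ⟨hbF₁, hba⟩ := mem_filter.1 hb
    obtain ⟨r, i⟩ := a
    obtain ⟨_, j⟩ := b
    subst hba
    rcases le_total j i with h | h
    · exact mem_filter.2 ⟨hF (Sigma.mk_le_mk_iff.2 h) haF, rfl⟩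
    · exact absurd (hF₁ (Sigma.mk_le_mk_iff.2 h) hbF₁) haF₁
  · exact mem_filter.2 ⟨haF, rfl⟩
  · exact fun h => haF₁ (mem_filter.1 h).1

lemma exists_mem_notMem_of_chainCount_lt {F F₁ : Finset (Ground f)} {s : R}
    (h : chainCount F s < chainCount F₁ s) : ∃ b ∈ F₁, b ∉ F ∧ b.1 = s := by
  by_contra! hF
  refine h.not_ge (card_le_card fun b hb => ?_)
  obtain ⟨hbF₁, rfl⟩ := mem_filter.1 hb
  exact mem_filter.2 ⟨not_not.1 fun hbF => hF b hbF₁ hbF rfl, rfl⟩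

lemma sum_insert_erase_eq {α : Type*} [DecidableEq α] {F : Finset α} {e g : α} (he : e ∈ F)
    (hg : g ∉ F) (w : α → ℝ) :
    ∑ a ∈ insert g (F.erase e), w a = ∑ a ∈ F, w a - w e + w g := by
  rw [sum_insert fun h => hg (mem_of_mem_erase h), sum_erase_eq_sub he, add_comm]

lemma MemFk.insert_erase [Fintype R] {k : ℕ} {F : Finset (Ground f)} (hF : MemFk f k F)
    {e g : Ground f} (he : Maximal (· ∈ F) e) (hg : Minimal (· ∉ F) g) (hne : e.1 ≠ g.1)
    (hslack : ∀ U : Finset R, g.1 ∈ U → e.1 ∉ U → ∑ t ∈ U, chainCount F t < f U) :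
    MemFk f k (insert g (F.erase e)) := by
  refine ⟨⟨?_, fun U => ?_⟩, ?_⟩
  · rw [isIdeal_iff_isLowerSet, coe_insert, coe_erase]
    exact (isIdeal_iff_isLowerSet.1 hF.1.1).insert_diff_singleton he hg
      fun h => hne (Sigma.lt_def.1 h).1
  · have hU := hF.1.2 U
    rw [filter_insert, filter_erase]
    split_ifs with hgU
    · by_cases heU : e.1 ∈ U
      · calc #(insert g ({a ∈ F | a.1 ∈ U}.erase e)) ≤ #({a ∈ F | a.1 ∈ U}.erase e) + 1 :=
              card_insert_le _ _
          _ = #{a ∈ F | a.1 ∈ U} := card_erase_add_one (mem_filter.2 ⟨he.1, heU⟩)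
          _ ≤ f U := hU
      · calc #(insert g ({a ∈ F | a.1 ∈ U}.erase e)) ≤ #{a ∈ F | a.1 ∈ U} + 1 :=
              (card_insert_le _ _).trans (Nat.add_le_add_right (card_erase_le) 1)
          _ ≤ f U := by
            rw [card_filter_fst_mem_eq_sum_chainCount]
            exact hslack U hgU heU
    · exact card_erase_le.trans hU
  · rw [card_insert_of_notMem fun h => hg.1 (mem_of_mem_erase h), card_erase_add_one he.1, hF.2]

lemma card_sdiff_insert_erase_lt {α : Type*} [DecidableEq α] {F F₁ : Finset α} {e g : α}
    (hgF : g ∈ F) (hgF₁ : g ∉ F₁) (heF : e ∉ F) : #(F \ insert g (F₁.erase e)) < #(F \ F₁) := by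
  refine (card_le_card fun c hc => ?_).trans_lt (card_erase_lt_of_mem (mem_sdiff.2 ⟨hgF, hgF₁⟩))
  simp only [mem_sdiff, mem_insert, mem_erase, not_or, not_and_or, not_not] at hc ⊢
  obtain ⟨hcF, hcg, rfl | hcF₁⟩ := hc
  · exact absurd hcF heF
  · exact ⟨hcg, hcF, hcF₁⟩

theorem MemFk.exists_improving_swap [Fintype R] (hf : IsPolymatroidRank f) {w : Ground f → ℝ}
    (hw : Monotone w) {k : ℕ} {F F₁ : Finset (Ground f)} (hF : MemFk f k F)
    (hF₁ : MemFk f k F₁) (hlt : ∑ a ∈ F₁, w a < ∑ a ∈ F, w a) :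
    ∃ e g : Ground f, Maximal (· ∈ F) e ∧ Minimal (· ∉ F) g ∧
      MemFk f k (insert g (F.erase e)) ∧ w g < w e := by
  induction hn : #(F \ F₁) using Nat.strong_induction_on generalizing F₁ with
  | _ n ih =>
  have hFl := isIdeal_iff_isLowerSet.1 hF.1.1
  have hF₁l := isIdeal_iff_isLowerSet.1 hF₁.1.1
  obtain ⟨a, haF, haF₁⟩ : ∃ a ∈ F, a ∉ F₁ := by
    by_contra! h
    obtain rfl := eq_of_subset_of_card_le h (by rw [hF.2, hF₁.2])
    exact hlt.false
  have hcount := chainCount_lt_of_mem_of_notMem hFl hF₁l haF haF₁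
  obtain ⟨s, hs, hslack, hslack₁⟩ := hF.1.inPolymatroid.exists_exchange hf.1 hf.2.2
    hF₁.1.inPolymatroid (by rw [sum_chainCount, sum_chainCount, hF.2, hF₁.2]) hcount
  obtain ⟨b, hbF₁, hbF, rfl⟩ := exists_mem_notMem_of_chainCount_lt hs
  have hab : a.1 ≠ b.1 := fun h => by rw [h] at hcount; omega
  obtain ⟨e, hae, he⟩ := Finite.exists_le_maximal (p := (· ∈ F)) haF
  obtain ⟨g, hgb, hg⟩ := Finite.exists_le_minimal (p := (· ∉ F)) hbF
  obtain ⟨e₁, hbe₁, he₁⟩ := Finite.exists_le_maximal (p := (· ∈ F₁)) hbF₁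
  obtain ⟨g₁, hg₁a, hg₁⟩ := Finite.exists_le_minimal (p := (· ∉ F₁)) haF₁
  obtain ⟨hae', -⟩ := Sigma.le_def.1 hae
  obtain ⟨hgb', -⟩ := Sigma.le_def.1 hgb
  obtain ⟨hbe₁', -⟩ := Sigma.le_def.1 hbe₁
  obtain ⟨hg₁a', -⟩ := Sigma.le_def.1 hg₁a
  rcases lt_or_ge (w g) (w e) with hwlt | hwge
  · refine ⟨e, g, he, hg, hF.insert_erase he hg (hae' ▸ hgb' ▸ hab) ?_, hwlt⟩
    exact hae' ▸ hgb' ▸ hslack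
  have hF₁' : MemFk f k (insert g₁ (F₁.erase e₁)) :=
    hF₁.insert_erase he₁ hg₁ (hbe₁' ▸ hg₁a' ▸ hab.symm) (hbe₁' ▸ hg₁a' ▸ hslack₁)
  refine ih _ (hn ▸ card_sdiff_insert_erase_lt (hFl hg₁a haF) hg₁.1 fun h => hbF (hFl hbe₁ h))
    hF₁' ?_ rfl
  rw [sum_insert_erase_eq he₁.1 hg₁.1]
  have := (hw hg₁a).trans ((hw hae).trans (hwge.trans ((hw hgb).trans (hw hbe₁))))
  linarith

end

theorem local_improvement_general
    {R : Type*} [Fintype R] [DecidableEq R]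
    (f : Finset R → ℕ) (hf : IsPolymatroidRank f)
    (w : Ground f → ℝ) (hw : Admissible f w)
    (k : ℕ) (F : Finset (Ground f)) (hF : MemFk f k F)
    (hnotmin : ¬ MinWeight f k w F) :
    ∃ e ∈ F, ∃ g : Ground f, g ∉ F ∧
      MemFk f k (insert g (F.erase e)) ∧ w g < w e ∧
      (∀ j : Fin (f {e.1}), (⟨e.1, j⟩ : Ground f) ∈ F → j ≤ e.2) ∧
      (∀ j : Fin (f {g.1}), (⟨g.1, j⟩ : Ground f) ∉ F → g.2 ≤ j) := by
  obtain ⟨F₁, hF₁, hlt⟩ : ∃ F₁, MemFk f k F₁ ∧ ∑ e ∈ F₁, w e < ∑ e ∈ F, w e := by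
    simpa [MinWeight, hF] using hnotmin
  obtain ⟨e, g, he, hg, hF', hwlt⟩ :=
    hF.exists_improving_swap hf (admissible_iff_monotone.1 hw) hF₁ hlt
  exact ⟨e, he.1, g, hg.1, hF', hwlt, he.snd_le_of_mem, hg.snd_le_of_notMem⟩

/-- (Local improvement) If `F ∈ 𝓕(k)` is not of minimal `w`-weight for an admissible `w`,
then there is a local improvement step `F → (F \ {e}) ∪ {g} ∈ 𝓕(k)` with `w e > w g`, where
`e` can be chosen `≼`-maximal in `F` and `g` can be chosen `≼`-minimal in `E \ F`. -/
theorem local_improvement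
    {R : Type*} [Fintype R] [Nonempty R] [DecidableEq R]
    (f : Finset R → ℕ) (hf : IsPolymatroidRank f)
    (w : Ground f → ℝ) (hw : Admissible f w)
    (k : ℕ) (F : Finset (Ground f)) (hF : MemFk f k F)
    (hnotmin : ¬ MinWeight f k w F) :
    ∃ e ∈ F, ∃ g : Ground f, g ∉ F ∧
      MemFk f k (insert g (F.erase e)) ∧ w g < w e ∧
      (∀ j : Fin (f {e.1}), (⟨e.1, j⟩ : Ground f) ∈ F → j ≤ e.2) ∧
      (∀ j : Fin (f {g.1}), (⟨g.1, j⟩ : Ground f) ∉ F → g.2 ≤ j) :=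
  local_improvement_general f hf w hw k F hF hnotmin
end

section
/- Let w : E → ℝ be admissible and let F ∈ 𝓕(k) be of minimal w-weight in 𝓕(k). Let r* ∈ R and let w̄ : E → ℝ be admissible, agree with w on every chain K_r with r ≠ r*, satisfy w̄(r*_t) = w(r*_{t+1}) for all 1 ≤ t < u_{r*}, and satisfy w̄(r*_{u_{r*}}) ≥ w(r*_{u_{r*}}). Suppose e ∈ F and g ∈ E \ F are such that F' = (F \ {e}) ∪ {g} ∈ 𝓕(k) and w̄(F') < w̄(F), and suppose p ∈ F' and h ∈ E \ F' are such that F'' = (F' \ {p}) ∪ {h} ∈ 𝓕(k) and w̄(F'') < w̄(F'). Then g ⋠ h (g is not below or equal to h in the order ≼). -/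
section Aux
variable {R : Type*} [DecidableEq R] {f : Finset R → ℕ}

lemma groundExt {x y : Ground f} (h1 : x.1 = y.1) (h2 : x.2.val = y.2.val) : x = y := by
  obtain ⟨r, i⟩ := x
  obtain ⟨s, j⟩ := y
  have h1' : r = s := h1
  subst h1'
  have h2' : i = j := Fin.ext h2
  rw [h2']

lemma idealMem {F : Finset (Ground f)} (hF : IsIdeal f F) {x y : Ground f}
    (hx : x ∈ F) (h1 : y.1 = x.1) (h2 : y.2.val ≤ x.2.val) : y ∈ F := by
  obtain ⟨r, i⟩ := x
  obtain ⟨s, j⟩ := y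
  have h1' : s = r := h1
  subst h1'
  exact hF _ j i h2 hx

lemma admMono {w : Ground f → ℝ} (hw : Admissible f w) {x y : Ground f}
    (h1 : x.1 = y.1) (h2 : x.2.val ≤ y.2.val) : w x ≤ w y := by
  obtain ⟨r, i⟩ := x
  obtain ⟨s, j⟩ := y
  have h1' : r = s := h1
  subst h1'
  exact hw r i j h2

lemma agreeEval {w wbar : Ground f → ℝ} {rstar : R}
    (hagree : ∀ (r : R) (i : Fin (f {r})), r ≠ rstar → wbar ⟨r, i⟩ = w ⟨r, i⟩)
    {x : Ground f} (hx : x.1 ≠ rstar) : wbar x = w x := by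
  obtain ⟨r, i⟩ := x
  exact hagree r i hx

lemma shiftEval {w wbar : Ground f → ℝ} {rstar : R}
    (hshift : ∀ (i : Fin (f {rstar})) (h : i.val + 1 < f {rstar}),
      wbar ⟨rstar, i⟩ = w ⟨rstar, ⟨i.val + 1, h⟩⟩)
    {x y : Ground f} (hx : x.1 = rstar) (hy : y.1 = rstar) (hxy : y.2.val = x.2.val + 1) :
    wbar x = w y := by
  obtain ⟨r, i⟩ := x
  obtain ⟨s, j⟩ := y
  have hx' : rstar = r := hx.symm; subst hx'
  have hy' : rstar = s := hy.symm; subst hy'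
  have hxy' : j.val = i.val + 1 := hxy
  have hlt : i.val + 1 < f {rstar} := by have := j.isLt; omega
  rw [hshift i hlt]
  exact congrArg w (groundExt rfl (by simpa using hxy'.symm))

lemma leWbar {w wbar : Ground f → ℝ} {rstar : R} (hw : Admissible f w)
    (hshift : ∀ (i : Fin (f {rstar})) (h : i.val + 1 < f {rstar}),
      wbar ⟨rstar, i⟩ = w ⟨rstar, ⟨i.val + 1, h⟩⟩)
    (htop : ∀ i : Fin (f {rstar}), i.val + 1 = f {rstar} → w ⟨rstar, i⟩ ≤ wbar ⟨rstar, i⟩)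
    {x : Ground f} (hx : x.1 = rstar) : w x ≤ wbar x := by
  obtain ⟨r, i⟩ := x
  have hx' : rstar = r := hx.symm; subst hx'
  rcases Nat.lt_or_ge (i.val + 1) (f {rstar}) with hlt | hge
  · rw [hshift i hlt]
    exact hw rstar i ⟨i.val + 1, hlt⟩ (by exact Nat.le_succ _)
  · exact htop i (by have := i.isLt; omega)

lemma diffChain {F : Finset (Ground f)} (hFI : IsIdeal f F) {a b : Ground f}
    (ha : a ∈ F) (hb : b ∉ F) (hI : IsIdeal f (insert b (F.erase a))) : a.1 ≠ b.1 := by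
  intro hab
  rcases le_or_gt b.2.val a.2.val with hba | hab2
  · exact hb (idealMem hFI ha hab.symm hba)
  · have haI : a ∈ insert b (F.erase a) :=
      idealMem hI (Finset.mem_insert_self b _) hab (le_of_lt hab2)
    rcases Finset.mem_insert.mp haI with h1 | h2
    · exact hb (h1 ▸ ha)
    · exact (Finset.notMem_erase a F) h2

end Aux

/-- If `F` is of minimal `w`-weight in `𝓕(k)`, `w̄` is the shifted weight function, and there
are improving local steps `F → F' = (F \ {e}) ∪ {g}` and `F' → F'' = (F' \ {p}) ∪ {h}` with
strictly decreasing `w̄`-weight, then `g ⋠ h`. -/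
theorem not_precEq_of_two_improvements
    {R : Type*} [Fintype R] [Nonempty R] [DecidableEq R]
    (f : Finset R → ℕ) (hf : IsPolymatroidRank f)
    (w : Ground f → ℝ) (hw : Admissible f w)
    (k : ℕ) (F : Finset (Ground f)) (hF : MinWeight f k w F)
    (rstar : R) (wbar : Ground f → ℝ) (hwbar : Admissible f wbar)
    (hagree : ∀ (r : R) (i : Fin (f {r})), r ≠ rstar → wbar ⟨r, i⟩ = w ⟨r, i⟩)
    (hshift : ∀ (i : Fin (f {rstar})) (h : i.val + 1 < f {rstar}),
      wbar ⟨rstar, i⟩ = w ⟨rstar, ⟨i.val + 1, h⟩⟩)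
    (htop : ∀ i : Fin (f {rstar}), i.val + 1 = f {rstar} →
      w ⟨rstar, i⟩ ≤ wbar ⟨rstar, i⟩)
    (e g : Ground f) (he : e ∈ F) (hg : g ∉ F)
    (hF' : MemFk f k (insert g (F.erase e)))
    (hlt : ∑ z ∈ insert g (F.erase e), wbar z < ∑ z ∈ F, wbar z)
    (p h : Ground f) (hp : p ∈ insert g (F.erase e)) (hh : h ∉ insert g (F.erase e))
    (hF'' : MemFk f k (insert h ((insert g (F.erase e)).erase p)))
    (hlt' : ∑ z ∈ insert h ((insert g (F.erase e)).erase p), wbar z <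
      ∑ z ∈ insert g (F.erase e), wbar z) :
    ¬ PrecEq f g h := by
  intro hgh
  obtain ⟨hgh1, hgh2⟩ := hgh
  set F1 := insert g (F.erase e) with hF1
  set F2 := insert h (F1.erase p) with hF2
  have hF'm := hF'
  have hF''m := hF''
  obtain ⟨⟨⟨hFI, hFb⟩, hFk⟩, hmin⟩ := hF
  obtain ⟨⟨hF'I, hF'b⟩, hF'k⟩ := hF'
  obtain ⟨⟨hF''I, hF''b⟩, hF''k⟩ := hF''
  have heg : e.1 ≠ g.1 := diffChain hFI he hg hF'I
  have hph : p.1 ≠ h.1 := diffChain hF'I hp hh hF''I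
  have hgF1 : g ∈ F1 := Finset.mem_insert_self g _
  have hgneh : g ≠ h := fun hc => hh (hc ▸ hgF1)
  have hlt_gh : g.2.val < h.2.val :=
    lt_of_le_of_ne hgh2 fun hv => hgneh (groundExt hgh1 hv)
  have hhe : h ≠ e := fun hc => heg (by rw [← hc]; exact hgh1.symm)
  have hhF : h ∉ F := fun hc => hh (Finset.mem_insert_of_mem (Finset.mem_erase.mpr ⟨hhe, hc⟩))
  have hpg : p ≠ g := fun hc => hph (by rw [hc]; exact hgh1)
  have hgF2 : g ∈ F2 := Finset.mem_insert_of_mem (Finset.mem_erase.mpr ⟨Ne.symm hpg, hgF1⟩)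
  have heF1 : e ∉ F1 := by
    intro hc
    rcases Finset.mem_insert.mp hc with h1 | h2
    · exact heg (by rw [h1])
    · exact Finset.notMem_erase e F h2
  have hpF : p ∈ F ∧ p ≠ e := by
    rcases Finset.mem_insert.mp hp with h1 | h2
    · exact absurd h1 hpg
    · exact ⟨Finset.mem_of_mem_erase h2, (Finset.mem_erase.mp h2).1⟩
  have hgE : g ∉ F.erase e := fun hc => hg (Finset.mem_of_mem_erase hc)
  have hhE : h ∉ F1.erase p := fun hc => hh (Finset.mem_of_mem_erase hc)
  have sum1w : ∑ z ∈ F1, wbar z = wbar g + ∑ z ∈ F, wbar z - wbar e := by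
    rw [hF1, Finset.sum_insert hgE]
    have h1 := Finset.sum_erase_add F wbar he
    linarith
  have sum1w' : ∑ z ∈ F1, w z = w g + ∑ z ∈ F, w z - w e := by
    rw [hF1, Finset.sum_insert hgE]
    have h1 := Finset.sum_erase_add F w he
    linarith
  have sum2w : ∑ z ∈ F2, wbar z = wbar h + ∑ z ∈ F1, wbar z - wbar p := by
    rw [hF2, Finset.sum_insert hhE]
    have h1 := Finset.sum_erase_add F1 wbar hp
    linarith
  have sum2w' : ∑ z ∈ F2, w z = w h + ∑ z ∈ F1, w z - w p := by
    rw [hF2, Finset.sum_insert hhE]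
    have h1 := Finset.sum_erase_add F1 w hp
    linarith
  have I1 : wbar g < wbar e := by rw [sum1w] at hlt; linarith
  have I2 : wbar h < wbar p := by rw [sum2w] at hlt'; linarith
  have I4 : w e ≤ w g := by
    have h1 := hmin F1 hF'm
    rw [sum1w'] at h1
    linarith
  have I3 : w e + w p ≤ w g + w h := by
    have h1 := hmin F2 hF''m
    rw [sum2w', sum1w'] at h1
    linarith
  have Iwgh : w g ≤ w h := admMono hw hgh1 hgh2
  have hsucc : h.2.val = g.2.val + 1 := by
    by_contra hns
    have h2lt : g.2.val + 1 < h.2.val := by omega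
    set m : Ground f := ⟨h.1, ⟨g.2.val + 1, lt_trans h2lt h.2.isLt⟩⟩ with hm
    have hmF2 : m ∈ F2 := idealMem hF''I (Finset.mem_insert_self h _) rfl (le_of_lt h2lt)
    have hmval : m.2.val = g.2.val + 1 := rfl
    have hmneh : m ≠ h := by intro hc; rw [hc] at hmval; omega
    have hmF1 : m ∈ F1 := by
      rcases Finset.mem_insert.mp hmF2 with h1 | h2
      · exact absurd h1 hmneh
      · exact Finset.mem_of_mem_erase h2
    have hmng : m ≠ g := by intro hc; rw [hc] at hmval; omega
    have hmF : m ∈ F := by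
      rcases Finset.mem_insert.mp hmF1 with h1 | h2
      · exact absurd h1 hmng
      · exact Finset.mem_of_mem_erase h2
    exact hg (idealMem hFI hmF hgh1 (by rw [hmval]; omega))
  by_cases hA : g.1 = rstar
  · -- Case A : the chain of g and h is rstar
    have hh1 : h.1 = rstar := hgh1 ▸ hA
    have he1 : e.1 ≠ rstar := fun hc => heg (hc.trans hA.symm)
    have hp1 : p.1 ≠ rstar := fun hc => hph (hc.trans hh1.symm)
    have hwe : wbar e = w e := agreeEval hagree he1
    have hwp : wbar p = w p := agreeEval hagree hp1
    have hgs : wbar g = w h := shiftEval hshift hA hh1 hsucc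
    have hhs : w h ≤ wbar h := leWbar hw hshift htop hh1
    linarith
  · -- Case B : the chain of g and h is not rstar
    have hh1 : h.1 ≠ rstar := fun hc => hA (hgh1.trans hc)
    have hwg : wbar g = w g := agreeEval hagree hA
    have hwh : wbar h = w h := agreeEval hagree hh1
    by_cases hE : e.1 = rstar
    · by_cases hP : p.1 = rstar
      · -- Case B1 : e and p are both on chain rstar
        have hpe_val : p.2.val < e.2.val := by
          by_contra hle
          push_neg at hle
          exact heF1 (idealMem hF'I hp (hE.trans hP.symm) hle)
        have hfe : p.2.val + 1 < f {rstar} := by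
          have h1 : e.2.val < f {rstar} := by
            have h2 := e.2.isLt
            have h3 : f {e.1} = f {rstar} := by rw [hE]
            omega
          omega
        have hq : wbar p = w ⟨rstar, ⟨p.2.val + 1, hfe⟩⟩ := shiftEval hshift hP rfl rfl
        have hq2 : w ⟨rstar, ⟨p.2.val + 1, hfe⟩⟩ ≤ w e := by
          refine admMono hw hE.symm ?_
          show p.2.val + 1 ≤ e.2.val
          omega
        linarith
      · -- Case B2 : e on chain rstar, p not; use the exchange F - p + g
        have hwp : wbar p = w p := agreeEval hagree hP
        have hpe1 : p.1 ≠ e.1 := fun hc => hP (hc.trans hE)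
        have hpg1 : p.1 ≠ g.1 := fun hc => hph (hc.trans hgh1)
        set G := insert g (F.erase p) with hG
        have hgEp : g ∉ F.erase p := fun hc => hg (Finset.mem_of_mem_erase hc)
        have hGcard : G.card = k := by
          rw [hG, Finset.card_insert_of_notMem hgEp, Finset.card_erase_of_mem hpF.1]
          have h1 : 0 < F.card := Finset.card_pos.mpr ⟨p, hpF.1⟩
          omega
        have hGI : IsIdeal f G := by
          intro r i j hij hjG
          rcases Finset.mem_insert.mp hjG with hje | hjF
          · have hgF1' : (⟨r, j⟩ : Ground f) ∈ F1 := by rw [hje]; exact hgF1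
            have hiF1 : (⟨r, i⟩ : Ground f) ∈ F1 := hF'I r i j hij hgF1'
            rcases Finset.mem_insert.mp hiF1 with hig | hiFe
            · rw [hig]; exact Finset.mem_insert_self g _
            · have hiF : (⟨r, i⟩ : Ground f) ∈ F := Finset.mem_of_mem_erase hiFe
              have hinep : (⟨r, i⟩ : Ground f) ≠ p := by
                intro hc
                apply hpg1
                rw [← hc, ← hje]
              exact Finset.mem_insert_of_mem (Finset.mem_erase.mpr ⟨hinep, hiF⟩)
          · have hjne : (⟨r, j⟩ : Ground f) ≠ p := (Finset.mem_erase.mp hjF).1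
            have hjFF : (⟨r, j⟩ : Ground f) ∈ F := Finset.mem_of_mem_erase hjF
            have hiF : (⟨r, i⟩ : Ground f) ∈ F := hFI r i j hij hjFF
            by_cases hip : (⟨r, i⟩ : Ground f) = p
            · exfalso
              have hjne_e : (⟨r, j⟩ : Ground f) ≠ e := by
                intro hc; apply hpe1; rw [← hip, ← hc]
              have hjF1 : (⟨r, j⟩ : Ground f) ∈ F1 :=
                Finset.mem_insert_of_mem (Finset.mem_erase.mpr ⟨hjne_e, hjFF⟩)
              have hjF2 : (⟨r, j⟩ : Ground f) ∈ F2 :=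
                Finset.mem_insert_of_mem (Finset.mem_erase.mpr ⟨hjne, hjF1⟩)
              have hpF2 : p ∈ F2 := by
                refine idealMem hF''I hjF2 (by rw [← hip]) ?_
                rw [← hip]
                exact hij
              have hpnF2 : p ∉ F2 := by
                intro hc
                rcases Finset.mem_insert.mp hc with h1 | h2
                · exact hph (by rw [h1])
                · exact Finset.notMem_erase p F1 h2
              exact hpnF2 hpF2
            · exact Finset.mem_insert_of_mem (Finset.mem_erase.mpr ⟨hip, hiF⟩)
        have hGb : ∀ U : Finset R, (G.filter fun z => z.1 ∈ U).card ≤ f U := by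
          intro U
          by_cases hgU : g.1 ∈ U
          · by_cases hpU : p.1 ∈ U
            · have heq : (G.filter fun z => z.1 ∈ U)
                  = insert g ((F.filter fun z => z.1 ∈ U).erase p) := by
                rw [hG, Finset.filter_insert, if_pos hgU, Finset.filter_erase]
              have hgnm : g ∉ (F.filter fun z => z.1 ∈ U).erase p := fun hc =>
                hg (Finset.mem_of_mem_filter _ (Finset.mem_of_mem_erase hc))
              have hpmem : p ∈ F.filter (fun z => z.1 ∈ U) :=
                Finset.mem_filter.mpr ⟨hpF.1, hpU⟩
              rw [heq, Finset.card_insert_of_notMem hgnm, Finset.card_erase_of_mem hpmem]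
              have h1 := hFb U
              have h2 : 0 < (F.filter fun z => z.1 ∈ U).card := Finset.card_pos.mpr ⟨p, hpmem⟩
              omega
            · have hsub : (G.filter fun z => z.1 ∈ U)
                  ⊆ insert e ((F2.filter fun z => z.1 ∈ U).erase h) := by
                intro x hx
                obtain ⟨hxG, hxU⟩ := Finset.mem_filter.mp hx
                rcases Finset.mem_insert.mp hxG with h1 | h2
                · subst h1
                  exact Finset.mem_insert_of_mem
                    (Finset.mem_erase.mpr ⟨hgneh, Finset.mem_filter.mpr ⟨hgF2, hxU⟩⟩)
                · have hxF : x ∈ F := Finset.mem_of_mem_erase h2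
                  have hxp : x ≠ p := (Finset.mem_erase.mp h2).1
                  by_cases hxe : x = e
                  · rw [hxe]; exact Finset.mem_insert_self e _
                  · have hxF1 : x ∈ F1 :=
                      Finset.mem_insert_of_mem (Finset.mem_erase.mpr ⟨hxe, hxF⟩)
                    have hxF2 : x ∈ F2 :=
                      Finset.mem_insert_of_mem (Finset.mem_erase.mpr ⟨hxp, hxF1⟩)
                    have hxh : x ≠ h := fun hc => hhF (hc ▸ hxF)
                    exact Finset.mem_insert_of_mem
                      (Finset.mem_erase.mpr ⟨hxh, Finset.mem_filter.mpr ⟨hxF2, hxU⟩⟩)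
              have hhmem : h ∈ F2.filter fun z => z.1 ∈ U :=
                Finset.mem_filter.mpr ⟨Finset.mem_insert_self h _, by rw [← hgh1]; exact hgU⟩
              calc (G.filter fun z => z.1 ∈ U).card
                  ≤ (insert e ((F2.filter fun z => z.1 ∈ U).erase h)).card :=
                    Finset.card_le_card hsub
                _ ≤ ((F2.filter fun z => z.1 ∈ U).erase h).card + 1 := Finset.card_insert_le _ _
                _ = (F2.filter fun z => z.1 ∈ U).card := by
                    rw [Finset.card_erase_of_mem hhmem]
                    have h1 : 0 < (F2.filter fun z => z.1 ∈ U).card :=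
                      Finset.card_pos.mpr ⟨h, hhmem⟩
                    omega
                _ ≤ f U := hF''b U
          · have hsub : (G.filter fun z => z.1 ∈ U) ⊆ F.filter fun z => z.1 ∈ U := by
              intro x hx
              obtain ⟨hxG, hxU⟩ := Finset.mem_filter.mp hx
              rcases Finset.mem_insert.mp hxG with h1 | h2
              · exact absurd (h1 ▸ hxU) hgU
              · exact Finset.mem_filter.mpr ⟨Finset.mem_of_mem_erase h2, hxU⟩
            exact le_trans (Finset.card_le_card hsub) (hFb U)
        have hGm : MemFk f k G := ⟨⟨hGI, hGb⟩, hGcard⟩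
        have hminG := hmin G hGm
        have sumG : ∑ z ∈ G, w z = w g + ∑ z ∈ F, w z - w p := by
          rw [hG, Finset.sum_insert hgEp]
          have h1 := Finset.sum_erase_add F w hpF.1
          linarith
        rw [sumG] at hminG
        linarith
    · -- e not on chain rstar
      have hwe : wbar e = w e := agreeEval hagree hE
      linarith
end

section
/- Suppose F ∈ 𝓕(k), that e ∈ F and g ∈ E \ F are such that F' = (F \ {e}) ∪ {g} ∈ 𝓕(k), that p ∈ F' and h ∈ E \ F' are such that F'' = (F' \ {p}) ∪ {h} ∈ 𝓕(k), and that g ⋠ h. Then (F \ {p}) ∪ {h} ∈ 𝓕(k) or (F \ {e}) ∪ {h} ∈ 𝓕(k). -/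

private lemma card_filter_insert' {α : Type*} [DecidableEq α] (q : α → Prop) [DecidablePred q]
    (S : Finset α) (x : α) (hx : x ∉ S) :
    ((insert x S).filter q).card = (S.filter q).card + (if q x then 1 else 0) := by
  rw [Finset.filter_insert]
  split
  · rw [Finset.card_insert_of_notMem (fun hm => hx (Finset.mem_of_mem_filter x hm))]
  · simp

private lemma card_filter_modular {R α : Type*} [DecidableEq R] [DecidableEq α]
    (S : Finset α) (w : α → R) (U V : Finset R) :
    (S.filter fun e => w e ∈ U).card + (S.filter fun e => w e ∈ V).card
      = (S.filter fun e => w e ∈ U ∪ V).card + (S.filter fun e => w e ∈ U ∩ V).card := by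
  have h1 : (S.filter fun e => w e ∈ U ∪ V)
      = (S.filter fun e => w e ∈ U) ∪ (S.filter fun e => w e ∈ V) := by
    ext a; simp [Finset.mem_union, Finset.mem_filter]; tauto
  have h2 : (S.filter fun e => w e ∈ U ∩ V)
      = (S.filter fun e => w e ∈ U) ∩ (S.filter fun e => w e ∈ V) := by
    ext a; simp [Finset.mem_inter, Finset.mem_filter]; tauto
  rw [h1, h2, Finset.card_union_add_card_inter]

/-- If `F ∈ 𝓕(k)`, `F' = (F \ {e}) ∪ {g} ∈ 𝓕(k)` with `e ∈ F`, `g ∉ F`,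
`F'' = (F' \ {p}) ∪ {h} ∈ 𝓕(k)` with `p ∈ F'`, `h ∉ F'`, and `g ⋠ h`, then
`(F \ {p}) ∪ {h} ∈ 𝓕(k)` or `(F \ {e}) ∪ {h} ∈ 𝓕(k)`. -/
theorem exchange_alternative
    {R : Type*} [Fintype R] [Nonempty R] [DecidableEq R]
    (f : Finset R → ℕ) (hf : IsPolymatroidRank f)
    (k : ℕ) (F : Finset (Ground f)) (hF : MemFk f k F)
    (e g : Ground f) (he : e ∈ F) (hg : g ∉ F)
    (hF' : MemFk f k (insert g (F.erase e)))
    (p h : Ground f) (hp : p ∈ insert g (F.erase e)) (hh : h ∉ insert g (F.erase e))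
    (hF'' : MemFk f k (insert h ((insert g (F.erase e)).erase p)))
    (hgh : ¬ PrecEq f g h) :
    MemFk f k (insert h (F.erase p)) ∨ MemFk f k (insert h (F.erase e)) := by
  classical
  have heg : e ≠ g := fun h' => hg (h' ▸ he)
  have heF' : e ∉ insert g (F.erase e) := by
    intro hm
    rcases Finset.mem_insert.mp hm with h1 | h1
    · exact heg h1
    · exact Finset.notMem_erase e F h1
  have hpF'' : p ∉ insert h ((insert g (F.erase e)).erase p) := by
    intro hmem
    rcases Finset.mem_insert.mp hmem with h1 | h1
    · exact hh (h1 ▸ hp)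
    · exact Finset.notMem_erase p _ h1
  by_cases hhe : h = e
  · right
    subst hhe
    rw [Finset.insert_erase he]
    exact hF
  by_cases hpg : p = g
  · right
    subst hpg
    have hge : p ∉ F.erase e := fun hm => hg (Finset.mem_of_mem_erase hm)
    rw [Finset.erase_insert hge] at hF''
    exact hF''
  -- general case
  have hpFe : p ∈ F.erase e := by
    rcases Finset.mem_insert.mp hp with h1 | h1
    · exact absurd h1 hpg
    · exact h1
  have hpF : p ∈ F := Finset.mem_of_mem_erase hpFe
  have hpe : p ≠ e := Finset.ne_of_mem_erase hpFe
  have hhF : h ∉ F := fun hm => hh (Finset.mem_insert_of_mem (Finset.mem_erase.mpr ⟨hhe, hm⟩))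
  have hhg : h ≠ g := fun h' => hh (by rw [h']; exact Finset.mem_insert_self g _)
  have hhp : h ≠ p := fun h' => hh (h' ▸ hp)
  have hgp : g ≠ p := fun h' => hpg h'.symm
  obtain ⟨⟨hFid, hFct⟩, hFcard⟩ := hF
  obtain ⟨⟨hF'id, hF'ct⟩, hF'card⟩ := hF'
  obtain ⟨⟨hF''id, hF''ct⟩, hF''card⟩ := hF''
  -- maximality of e in F
  have emax : ∀ (r : R) (i j : Fin (f {r})), i ≤ j → (⟨r, j⟩ : Ground f) ∈ F →
      (⟨r, i⟩ : Ground f) = e → (⟨r, j⟩ : Ground f) = e := by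
    intro r i j hij hjF hie
    by_contra hne
    have hjF' : (⟨r, j⟩ : Ground f) ∈ insert g (F.erase e) :=
      Finset.mem_insert_of_mem (Finset.mem_erase.mpr ⟨hne, hjF⟩)
    have hmem := hF'id r i j hij hjF'
    rw [hie] at hmem
    exact heF' hmem
  -- maximality of p in F'
  have pmax : ∀ (r : R) (i j : Fin (f {r})), i ≤ j →
      (⟨r, j⟩ : Ground f) ∈ insert g (F.erase e) →
      (⟨r, i⟩ : Ground f) = p → (⟨r, j⟩ : Ground f) = p := by
    intro r i j hij hjF' hip
    by_contra hne
    have hjF'' : (⟨r, j⟩ : Ground f) ∈ insert h ((insert g (F.erase e)).erase p) :=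
      Finset.mem_insert_of_mem (Finset.mem_erase.mpr ⟨hne, hjF'⟩)
    have hmem := hF''id r i j hij hjF''
    rw [hip] at hmem
    exact hpF'' hmem
  -- B = insert h (F.erase e) is an ideal
  have hBid : IsIdeal f (insert h (F.erase e)) := by
    intro r i j hij hjB
    rcases Finset.mem_insert.mp hjB with hjh | hjFe
    · have hjF'' : (⟨r, j⟩ : Ground f) ∈ insert h ((insert g (F.erase e)).erase p) := by
        rw [hjh]; exact Finset.mem_insert_self _ _
      have hiF'' := hF''id r i j hij hjF''
      rcases Finset.mem_insert.mp hiF'' with hih | hiF'p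
      · exact Finset.mem_insert.mpr (Or.inl hih)
      · have hiF' := Finset.mem_of_mem_erase hiF'p
        rcases Finset.mem_insert.mp hiF' with hig | hiFe
        · exact absurd (show PrecEq f g h by rw [← hig, ← hjh]; exact ⟨rfl, hij⟩) hgh
        · exact Finset.mem_insert_of_mem hiFe
    · have hjF : (⟨r, j⟩ : Ground f) ∈ F := Finset.mem_of_mem_erase hjFe
      have hiF := hFid r i j hij hjF
      by_cases hie : (⟨r, i⟩ : Ground f) = e
      · exact absurd (emax r i j hij hjF hie) (Finset.ne_of_mem_erase hjFe)
      · exact Finset.mem_insert_of_mem (Finset.mem_erase.mpr ⟨hie, hiF⟩)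
  -- A = insert h (F.erase p) is an ideal provided p.1 ≠ e.1
  have hAid : p.fst ≠ e.fst → IsIdeal f (insert h (F.erase p)) := by
    intro hpe1 r i j hij hjA
    rcases Finset.mem_insert.mp hjA with hjh | hjFp
    · have hjF'' : (⟨r, j⟩ : Ground f) ∈ insert h ((insert g (F.erase e)).erase p) := by
        rw [hjh]; exact Finset.mem_insert_self _ _
      have hiF'' := hF''id r i j hij hjF''
      rcases Finset.mem_insert.mp hiF'' with hih | hiF'p
      · exact Finset.mem_insert.mpr (Or.inl hih)
      · have hiner := Finset.mem_erase.mp hiF'p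
        rcases Finset.mem_insert.mp hiner.2 with hig | hiFe
        · exact absurd (show PrecEq f g h by rw [← hig, ← hjh]; exact ⟨rfl, hij⟩) hgh
        · exact Finset.mem_insert_of_mem
            (Finset.mem_erase.mpr ⟨hiner.1, Finset.mem_of_mem_erase hiFe⟩)
    · have hjF : (⟨r, j⟩ : Ground f) ∈ F := Finset.mem_of_mem_erase hjFp
      by_cases hip : (⟨r, i⟩ : Ground f) = p
      · by_cases hje : (⟨r, j⟩ : Ground f) = e
        · exact absurd (show p.fst = e.fst by rw [← hip, ← hje]) hpe1
        · have hjF' : (⟨r, j⟩ : Ground f) ∈ insert g (F.erase e) :=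
            Finset.mem_insert_of_mem (Finset.mem_erase.mpr ⟨hje, hjF⟩)
          exact absurd (pmax r i j hij hjF' hip) (Finset.ne_of_mem_erase hjFp)
      · exact Finset.mem_insert_of_mem (Finset.mem_erase.mpr ⟨hip, hFid r i j hij hjF⟩)
  -- the core set D
  set D := (F.erase e).erase p with hD
  have hpD : p ∉ D := Finset.notMem_erase _ _
  have heD : e ∉ D := fun hm => Finset.notMem_erase e F (Finset.mem_of_mem_erase hm)
  have hDF : D ⊆ F := (Finset.erase_subset _ _).trans (Finset.erase_subset _ _)
  have hgD : g ∉ D := fun hm => hg (hDF hm)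
  have hhD : h ∉ D := fun hm => hhF (hDF hm)
  have heIns : e ∉ insert p D := by
    intro hm; rcases Finset.mem_insert.mp hm with h' | h'
    exacts [hpe h'.symm, heD h']
  have hhInsP : h ∉ insert p D := by
    intro hm; rcases Finset.mem_insert.mp hm with h' | h'
    exacts [hhp h', hhD h']
  have hhInsE : h ∉ insert e D := by
    intro hm; rcases Finset.mem_insert.mp hm with h' | h'
    exacts [hhe h', hhD h']
  have hhInsG : h ∉ insert g D := by
    intro hm; rcases Finset.mem_insert.mp hm with h' | h'
    exacts [hhg h', hhD h']
  have hFe_eq : F.erase e = insert p D := (Finset.insert_erase hpFe).symm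
  have hF_eq : F = insert e (insert p D) := by rw [← hFe_eq, Finset.insert_erase he]
  have hFp_eq : F.erase p = insert e D := by
    rw [hD, Finset.erase_right_comm]
    exact (Finset.insert_erase (Finset.mem_erase.mpr ⟨fun h' => hpe h'.symm, he⟩)).symm
  have hF''set : (insert g (F.erase e)).erase p = insert g D := by
    rw [hFe_eq, Finset.erase_insert_of_ne hgp, Finset.erase_insert hpD]
  -- counting identities
  have cF : ∀ U : Finset R, (F.filter fun x => x.1 ∈ U).card
      = (D.filter fun x => x.1 ∈ U).card
        + (if e.1 ∈ U then 1 else 0) + (if p.1 ∈ U then 1 else 0) := by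
    intro U
    rw [hF_eq, card_filter_insert' _ _ e heIns, card_filter_insert' _ _ p hpD]
    ring
  have cF'' : ∀ U : Finset R,
      ((insert h ((insert g (F.erase e)).erase p)).filter fun x => x.1 ∈ U).card
      = (D.filter fun x => x.1 ∈ U).card
        + (if g.1 ∈ U then 1 else 0) + (if h.1 ∈ U then 1 else 0) := by
    intro U
    rw [hF''set, card_filter_insert' _ _ h hhInsG, card_filter_insert' _ _ g hgD]
  have cA : ∀ U : Finset R, ((insert h (F.erase p)).filter fun x => x.1 ∈ U).card
      = (D.filter fun x => x.1 ∈ U).card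
        + (if e.1 ∈ U then 1 else 0) + (if h.1 ∈ U then 1 else 0) := by
    intro U
    rw [hFp_eq, card_filter_insert' _ _ h hhInsE, card_filter_insert' _ _ e heD]
  have cB : ∀ U : Finset R, ((insert h (F.erase e)).filter fun x => x.1 ∈ U).card
      = (D.filter fun x => x.1 ∈ U).card
        + (if p.1 ∈ U then 1 else 0) + (if h.1 ∈ U then 1 else 0) := by
    intro U
    rw [hFe_eq, card_filter_insert' _ _ h hhInsP, card_filter_insert' _ _ p hpD]
  -- cardinalities
  have cardD : D.card + 2 = k := by
    rw [← hFcard, hF_eq, Finset.card_insert_of_notMem heIns,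
      Finset.card_insert_of_notMem hpD]
  have cardA : (insert h (F.erase p)).card = k := by
    rw [hFp_eq, Finset.card_insert_of_notMem hhInsE, Finset.card_insert_of_notMem heD]
    omega
  have cardB : (insert h (F.erase e)).card = k := by
    rw [hFe_eq, Finset.card_insert_of_notMem hhInsP, Finset.card_insert_of_notMem hpD]
    omega
  by_cases hBct : ∀ U : Finset R, ((insert h (F.erase e)).filter fun x => x.1 ∈ U).card ≤ f U
  · exact Or.inr ⟨⟨hBid, hBct⟩, cardB⟩
  · left
    push_neg at hBct
    obtain ⟨V, hV⟩ := hBct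
    have hFV := hFct V
    have hF''V := hF''ct V
    rw [cB V] at hV
    rw [cF V] at hFV
    rw [cF'' V] at hF''V
    have hhV : h.fst ∈ V := by
      by_contra hc
      rw [if_neg hc] at hV
      omega
    rw [if_pos hhV] at hV hF''V
    have heV : e.fst ∉ V := by
      intro hc
      rw [if_pos hc] at hFV
      omega
    rw [if_neg heV] at hFV
    have hpV : p.fst ∈ V := by
      by_contra hc
      rw [if_neg hc] at hV
      omega
    rw [if_pos hpV] at hV hFV
    have hgV : g.fst ∉ V := by
      intro hc
      rw [if_pos hc] at hF''V
      omega
    rw [if_neg hgV] at hF''V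
    have htV : (D.filter fun x => x.1 ∈ V).card + 1 = f V := by omega
    have hpe1 : p.fst ≠ e.fst := fun hq => heV (hq ▸ hpV)
    have htFV : (F.filter fun x => x.1 ∈ V).card = f V := by
      rw [cF V, if_neg heV, if_pos hpV]
      omega
    have hAct : ∀ U : Finset R, ((insert h (F.erase p)).filter fun x => x.1 ∈ U).card ≤ f U := by
      intro U
      by_contra hU
      push_neg at hU
      rw [cA U] at hU
      have hFU := hFct U
      have hF''U := hF''ct U
      rw [cF U] at hFU
      rw [cF'' U] at hF''U
      have hhU : h.fst ∈ U := by
        by_contra hc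
        rw [if_neg hc] at hU
        omega
      rw [if_pos hhU] at hU hF''U
      have heU : e.fst ∈ U := by
        by_contra hc
        rw [if_neg hc] at hU
        omega
      rw [if_pos heU] at hU hFU
      have hpU : p.fst ∉ U := by
        intro hc
        rw [if_pos hc] at hFU
        omega
      rw [if_neg hpU] at hFU
      have hgU : g.fst ∉ U := by
        intro hc
        rw [if_pos hc] at hF''U
        omega
      rw [if_neg hgU] at hF''U
      have htU : (D.filter fun x => x.1 ∈ U).card + 1 = f U := by omega
      have htFU : (F.filter fun x => x.1 ∈ U).card = f U := by
        rw [cF U, if_pos heU, if_neg hpU]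
        omega
      have hmod := card_filter_modular F (fun x : Ground f => x.1) U V
      have hsub := hf.1 U V
      have hFuv := hFct (U ∪ V)
      have hFiv := hFct (U ∩ V)
      have htiv : (F.filter fun x => x.1 ∈ U ∩ V).card = f (U ∩ V) := by omega
      have hF''iv := hF''ct (U ∩ V)
      rw [cF'' (U ∩ V)] at hF''iv
      rw [cF (U ∩ V)] at htiv
      have hhiv : h.fst ∈ U ∩ V := Finset.mem_inter.mpr ⟨hhU, hhV⟩
      have heiv : e.fst ∉ U ∩ V := fun hm => heV (Finset.mem_inter.mp hm).2
      have hpiv : p.fst ∉ U ∩ V := fun hm => hpU (Finset.mem_inter.mp hm).1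
      have hgiv : g.fst ∉ U ∩ V := fun hm => hgU (Finset.mem_inter.mp hm).1
      rw [if_pos hhiv, if_neg hgiv] at hF''iv
      rw [if_neg heiv, if_neg hpiv] at htiv
      omega
    exact ⟨⟨hAid hpe1, hAct⟩, cardA⟩
end
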